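/- arXiv:1207.6073 — 8 statements merged into one kernel-verified Lean document; each statement's English description precedes it below -/
import Mathlib

section
/- Let ε : [0,l] → ℝ be measurable with 1 ≤ ε(s) for all s, let c > 0, and let z ∈ ℂ with Im(z²) < 0. Let ψ be the solution of ψ''(s) = -(z²/c²)·ε(s)·ψ(s) with ψ(0) = 0, ψ'(0) = 1. Then ψ(s) ≠ 0 for all s in (0, l]. -/
/-!
The current `G = Im (conj ψ · ψ')` has derivative `-Im (z²)/c² · ε · |ψ|² ≥ 0`, since the term
`|ψ'|²` is real. If `ψ` vanished at some `s₀ ∈ (0, l]`, then `G` would be monotone on `[0, s₀]`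
and zero at both ends, hence constant, so its derivative, and with it `ψ`, would vanish on
`(0, s₀)`. This contradicts `ψ'(0) = 1`.
-/

open Set Filter Topology ComplexConjugate

theorem hasDerivAt_im_conj_mul {f f' : ℝ → ℂ} {f'' : ℂ} {x : ℝ}
    (hf : HasDerivAt f (f' x) x) (hf' : HasDerivAt f' f'' x) :
    HasDerivAt (fun t ↦ (conj (f t) * f' t).im) (conj (f x) * f'').im x := by
  have h := Complex.imCLM.hasFDerivAt.comp_hasDerivAt x (hf.star.mul hf')
  simp only [Function.comp_def, Complex.imCLM_apply, Complex.star_def, Pi.mul_apply] at h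
  refine h.congr_deriv ?_
  simp [Complex.conj_mul', ← Complex.ofReal_pow]

theorem Complex.im_conj_mul_mul_ofReal_mul (w a : ℂ) (r : ℝ) :
    (conj w * (a * r * w)).im = a.im * r * ‖w‖ ^ 2 := by
  rw [show conj w * (a * r * w) = a * ((r * ‖w‖ ^ 2 : ℝ) : ℂ) by
    push_cast; rw [← Complex.conj_mul']; ring]
  rw [Complex.mul_im, Complex.ofReal_re, Complex.ofReal_im]
  ring

theorem eqOn_zero_of_hasDerivAt_nonneg_of_eq {G g : ℝ → ℝ} {a b : ℝ}
    (hG : ∀ x ∈ Icc a b, HasDerivAt G (g x) x) (hg : ∀ x ∈ Ioo a b, 0 ≤ g x)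
    (hGab : G a = G b) : EqOn g 0 (Ioo a b) := by
  intro x hx
  have hmono : MonotoneOn G (Icc a b) := by
    refine monotoneOn_of_hasDerivWithinAt_nonneg (f' := g) (convex_Icc a b)
      (fun y hy ↦ (hG y hy).continuousAt.continuousWithinAt) (fun y hy ↦ ?_) ?_
    · rw [interior_Icc] at hy
      exact (hG y (Ioo_subset_Icc_self hy)).hasDerivWithinAt
    · simpa only [interior_Icc] using hg
  have hab : a ≤ b := (hx.1.trans hx.2).le
  have hconst : EqOn G (fun _ ↦ G a) (Ioo a b) := fun y hy ↦
    le_antisymm (hGab ▸ hmono (Ioo_subset_Icc_self hy) (right_mem_Icc.2 hab) hy.2.le)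
      (hmono (left_mem_Icc.2 hab) (Ioo_subset_Icc_self hy) hy.1.le)
  have hG0 : HasDerivAt G 0 x :=
    (hasDerivAt_const x (G a)).congr_of_eventuallyEq
      (eventuallyEq_of_mem (Ioo_mem_nhds hx.1 hx.2) hconst)
  exact (hG x (Ioo_subset_Icc_self hx)).unique hG0

theorem HasDerivAt.eq_zero_of_eventuallyEq_zero_nhdsGT {E : Type*} [NormedAddCommGroup E]
    [NormedSpace ℝ E] {f : ℝ → E} {f' : E} {x : ℝ} (hf : HasDerivAt f f' x)
    (hx : f x = 0) (h : f =ᶠ[𝓝[>] x] 0) : f' = 0 :=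
  (uniqueDiffWithinAt_Ioi x).eq_deriv _ hf.hasDerivWithinAt
    ((hasDerivWithinAt_const x _ 0).congr_of_eventuallyEq h hx)

theorem psi_ne_zero_general
    (l c : ℝ) (hc : 0 < c)
    (ε : ℝ → ℝ) (hε : ∀ s, 1 ≤ ε s)
    (z : ℂ) (hz : (z ^ 2).im < 0)
    (ψ ψ' : ℝ → ℂ)
    (hψ : ∀ s ∈ Icc (0 : ℝ) l, HasDerivAt ψ (ψ' s) s)
    (hψ' : ∀ s ∈ Icc (0 : ℝ) l,
      HasDerivAt ψ' (-(z ^ 2 / (c : ℂ) ^ 2) * (ε s : ℂ) * ψ s) s)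
    (h0 : ψ 0 = 0) (h1 : ψ' 0 = 1) :
    ∀ s ∈ Ioc (0 : ℝ) l, ψ s ≠ 0 := by
  rintro s₀ ⟨hs₀, hs₀l⟩ hψs₀
  have hIcc : Icc 0 s₀ ⊆ Icc 0 l := Icc_subset_Icc_right hs₀l
  have hK : 0 < -(z ^ 2).im / c ^ 2 := div_pos (neg_pos.2 hz) (by positivity)
  have hG : ∀ s ∈ Icc 0 s₀, HasDerivAt (fun t ↦ (conj (ψ t) * ψ' t).im)
      (-(z ^ 2).im / c ^ 2 * ε s * ‖ψ s‖ ^ 2) s := by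
    intro s hs
    convert hasDerivAt_im_conj_mul (hψ s (hIcc hs)) (hψ' s (hIcc hs)) using 1
    rw [Complex.im_conj_mul_mul_ofReal_mul, Complex.neg_im, ← Complex.ofReal_pow,
      Complex.div_ofReal_im]
    ring
  have hzero := eqOn_zero_of_hasDerivAt_nonneg_of_eq hG
    (fun s _ ↦ by have := hε s; positivity) (by simp [h0, hψs₀])
  have hψ0 : ψ =ᶠ[𝓝[>] 0] 0 := by
    filter_upwards [Ioo_mem_nhdsGT hs₀] with s hs
    have hεs : ε s ≠ 0 := by linarith [hε s]
    simpa [hK.ne', hεs] using hzero hs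
  have hψ'0 := (hψ 0 (hIcc (left_mem_Icc.2 hs₀.le))).eq_zero_of_eventuallyEq_zero_nhdsGT h0 hψ0
  exact one_ne_zero (h1 ▸ hψ'0)

/-- If `Im (z²) < 0`, the solution `ψ` of `ψ'' = -(z²/c²)·ε·ψ`, `ψ(0)=0`, `ψ'(0)=1`,
with measurable `ε ≥ 1`, does not vanish on `(0, l]`. -/
theorem psi_ne_zero
    (l c : ℝ) (hl : 0 < l) (hc : 0 < c)
    (ε : ℝ → ℝ) (hmeas : Measurable ε) (hε : ∀ s, 1 ≤ ε s)
    (z : ℂ) (hz : (z ^ 2).im < 0)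
    (ψ ψ' : ℝ → ℂ)
    (hψ : ∀ s ∈ Icc (0 : ℝ) l, HasDerivAt ψ (ψ' s) s)
    (hψ' : ∀ s ∈ Icc (0 : ℝ) l,
      HasDerivAt ψ' (-(z ^ 2 / (c : ℂ) ^ 2) * (ε s : ℂ) * ψ s) s)
    (h0 : ψ 0 = 0) (h1 : ψ' 0 = 1) :
    ∀ s ∈ Ioc (0 : ℝ) l, ψ s ≠ 0 :=
  psi_ne_zero_general l c hc ε hε z hz ψ ψ' hψ hψ' h0 h1
end

section
/- Let ε : [0,l] → ℝ be measurable with 1 ≤ ε(s), c > 0, and z ∈ ℂ with Im(z²) < 0. Let ψ solve ψ'' = -(z²/c²)·ε·ψ with ψ(0)=0, ψ'(0)=1, and suppose ψ(s) ≠ 0 on (0,l]. Define ξ(s) as a continuous branch of arg(ψ²(s)) on (0,l]. Then ξ is strictly increasing on (0,l]. -/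
/-!
`W = Im (ψ' · conj ψ)` satisfies `W' = Im (-(z²/c²) ε) |ψ|² > 0` and `W 0 = 0`, so `W > 0` on
`(0, l]`. Near a point `x` where `ψ x ≠ 0`, a continuous branch `ξ` of `arg ψ²` stays within `π`
of `ξ x`, hence equals `ξ x + arg (ψ² / ψ² x)` there; differentiating the logarithm gives
`ξ' = Im (2ψ'/ψ) = 2W / |ψ|² > 0`.
-/

open Set Complex Filter Topology ComplexConjugate

theorem arg_div_eq_sub {v w : ℂ} {α β : ℝ} (hv : v ≠ 0) (hw : w ≠ 0)
    (hα : v = ‖v‖ * exp (α * I)) (hβ : w = ‖w‖ * exp (β * I))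
    (hβα : β - α ∈ Ioc (-Real.pi) Real.pi) : arg (w / v) = β - α := by
  have hquot : w / v = ((‖w‖ / ‖v‖ : ℝ) : ℂ) * exp ((β - α : ℝ) * I) := by
    have hv' : (‖v‖ : ℂ) ≠ 0 := by exact_mod_cast norm_ne_zero_iff.2 hv
    calc w / v = ‖w‖ * exp (β * I) / (‖v‖ * exp (α * I)) := by rw [← hα, ← hβ]
      _ = _ := by
        push_cast
        rw [sub_mul, exp_sub]
        field_simp
  rw [hquot, exp_mul_I]
  exact arg_mul_cos_add_sin_mul_I (div_pos (norm_pos_iff.2 hw) (norm_pos_iff.2 hv)) hβα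

theorem eventually_eq_add_arg_div {f : ℝ → ℂ} {ξ : ℝ → ℝ} {x : ℝ} (hf : ContinuousAt f x)
    (hfx : f x ≠ 0) (hξ : ContinuousAt ξ x)
    (harg : ∀ᶠ s in 𝓝 x, f s = ‖f s‖ * exp (ξ s * I)) :
    ∀ᶠ s in 𝓝 x, ξ s = ξ x + arg (f s / f x) := by
  have hclose : ∀ᶠ s in 𝓝 x, ξ s ∈ Ioo (ξ x - Real.pi) (ξ x + Real.pi) :=
    hξ (Ioo_mem_nhds (by linarith [Real.pi_pos]) (by linarith [Real.pi_pos]))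
  filter_upwards [hf.eventually_ne hfx, hclose, harg] with s hfs hξs hargs
  rw [arg_div_eq_sub hfx hfs harg.self_of_nhds hargs ⟨by linarith [hξs.1], by linarith [hξs.2]⟩]
  ring

theorem hasDerivAt_of_eventually_eq_norm_mul_exp {f : ℝ → ℂ} {f' : ℂ} {ξ : ℝ → ℝ} {x : ℝ}
    (hf : HasDerivAt f f' x) (hfx : f x ≠ 0) (hξ : ContinuousAt ξ x)
    (harg : ∀ᶠ s in 𝓝 x, f s = ‖f s‖ * exp (ξ s * I)) :
    HasDerivAt ξ (f' / f x).im x := by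
  have hlog : HasDerivAt (fun s => log (f s / f x)) (f' / f x) x := by
    simpa [hfx] using (hf.div_const (f x)).clog_real (by simp [hfx])
  have hbranch : HasDerivAt (fun s => ξ x + arg (f s / f x)) (f' / f x).im x := by
    simpa [log_im] using (imCLM.hasFDerivAt.comp_hasDerivAt x hlog).const_add (ξ x)
  exact hbranch.congr_of_eventuallyEq (eventually_eq_add_arg_div hf.continuousAt hfx hξ harg)

theorem im_div_eq_im_mul_conj_div_normSq (w v : ℂ) :
    (w / v).im = (w * conj v).im / normSq v := by
  rw [div_eq_mul_inv, inv_def, ← mul_assoc, im_mul_ofReal, div_eq_mul_inv]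

theorem hasDerivAt_of_eventually_sq_eq_norm_mul_exp {ψ : ℝ → ℂ} {ψ' : ℂ} {ξ : ℝ → ℝ} {x : ℝ}
    (hψ : HasDerivAt ψ ψ' x) (hψx : ψ x ≠ 0) (hξ : ContinuousAt ξ x)
    (harg : ∀ᶠ s in 𝓝 x, ψ s ^ 2 = ‖ψ s ^ 2‖ * exp (ξ s * I)) :
    HasDerivAt ξ (2 * (ψ' * conj (ψ x)).im / normSq (ψ x)) x := by
  have hsq : HasDerivAt (fun s => ψ s ^ 2) (2 * ψ x * ψ') x := by simpa using hψ.fun_pow 2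
  have hlogDeriv : 2 * ψ x * ψ' / ψ x ^ 2 = 2 * (ψ' / ψ x) := by field_simp
  convert hasDerivAt_of_eventually_eq_norm_mul_exp hsq (pow_ne_zero 2 hψx) hξ harg using 1
  rw [hlogDeriv, ← ofReal_ofNat, im_ofReal_mul, im_div_eq_im_mul_conj_div_normSq, mul_div_assoc]

theorem hasDerivAt_im_mul_conj {ψ ψ' : ℝ → ℂ} {V : ℂ} {x : ℝ}
    (hψ : HasDerivAt ψ (ψ' x) x) (hψ' : HasDerivAt ψ' (V * ψ x) x) :
    HasDerivAt (fun s => (ψ' s * conj (ψ s)).im) (V.im * normSq (ψ x)) x := by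
  refine (imCLM.hasFDerivAt.comp_hasDerivAt x (hψ'.mul hψ.star)).congr_deriv ?_
  simp only [imCLM_apply, add_im, mul_assoc, RCLike.star_def, mul_conj, im_mul_ofReal, ofReal_im,
    add_zero]

theorem im_mul_conj_pos {ψ ψ' V : ℝ → ℂ} {a b s : ℝ}
    (hψ : ∀ t ∈ Icc a b, HasDerivAt ψ (ψ' t) t)
    (hψ' : ∀ t ∈ Icc a b, HasDerivAt ψ' (V t * ψ t) t)
    (hV : ∀ t ∈ Ioo a b, 0 < (V t).im) (ha : ψ a = 0) (hne : ∀ t ∈ Ioo a b, ψ t ≠ 0)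
    (hs : s ∈ Ioc a b) : 0 < (ψ' s * conj (ψ s)).im := by
  have hW := fun t ht => hasDerivAt_im_mul_conj (hψ t ht) (hψ' t ht)
  have hmono : StrictMonoOn (fun t => (ψ' t * conj (ψ t)).im) (Icc a b) :=
    strictMonoOn_of_deriv_pos (convex_Icc a b)
      (fun t ht => (hW t ht).continuousAt.continuousWithinAt) fun t ht => by
        rw [interior_Icc] at ht
        rw [(hW t (Ioo_subset_Icc_self ht)).deriv]
        exact mul_pos (hV t ht) (normSq_pos.2 (hne t ht))
  simpa [ha] using hmono ⟨le_rfl, hs.1.le.trans hs.2⟩ (Ioc_subset_Icc_self hs) hs.1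

theorem arg_psi_sq_strictMono_general
    (l c : ℝ) (hc : 0 < c)
    (ε : ℝ → ℝ) (hε : ∀ s, 1 ≤ ε s)
    (z : ℂ) (hz : (z ^ 2).im < 0)
    (ψ ψ' : ℝ → ℂ)
    (hψ : ∀ s ∈ Icc (0 : ℝ) l, HasDerivAt ψ (ψ' s) s)
    (hψ' : ∀ s ∈ Icc (0 : ℝ) l,
      HasDerivAt ψ' (-(z ^ 2 / (c : ℂ) ^ 2) * (ε s : ℂ) * ψ s) s)
    (h0 : ψ 0 = 0)
    (hne : ∀ s ∈ Ioc (0 : ℝ) l, ψ s ≠ 0)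
    (ξ : ℝ → ℝ) (hξcont : ContinuousOn ξ (Ioc (0 : ℝ) l))
    (hξarg : ∀ s ∈ Ioc (0 : ℝ) l,
      (ψ s) ^ 2 = (‖(ψ s) ^ 2‖ : ℂ) * Complex.exp ((ξ s : ℂ) * Complex.I)) :
    StrictMonoOn ξ (Ioc (0 : ℝ) l) := by
  have hV : ∀ s, 0 < (-(z ^ 2 / (c : ℂ) ^ 2) * (ε s : ℂ)).im := fun s => by
    rw [im_mul_ofReal, neg_im, ← ofReal_pow, div_ofReal_im, ← neg_div]
    exact mul_pos (div_pos (neg_pos.2 hz) (by positivity)) (by linarith [hε s])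
  have hW : ∀ s ∈ Ioc 0 l, 0 < (ψ' s * conj (ψ s)).im := fun s hs =>
    im_mul_conj_pos hψ hψ' (fun t _ => hV t) h0 (fun t ht => hne t (Ioo_subset_Ioc_self ht)) hs
  refine strictMonoOn_of_deriv_pos (convex_Ioc 0 l) hξcont fun s hs => ?_
  rw [interior_Ioc] at hs
  have hs' : s ∈ Ioc 0 l := Ioo_subset_Ioc_self hs
  have hnhds : Ioc 0 l ∈ 𝓝 s := Ioc_mem_nhds hs.1 hs.2
  rw [(hasDerivAt_of_eventually_sq_eq_norm_mul_exp (hψ s (Ioc_subset_Icc_self hs')) (hne s hs')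
    (hξcont.continuousAt hnhds) (eventually_of_mem hnhds hξarg)).deriv]
  exact div_pos (mul_pos two_pos (hW s hs')) (normSq_pos.2 (hne s hs'))

/-- If `Im (z²) < 0` and `ψ` solves `ψ'' = -(z²/c²)·ε·ψ`, `ψ(0)=0`, `ψ'(0)=1`, and
`ψ ≠ 0` on `(0,l]`, then any continuous branch `ξ` of `arg ψ²` on `(0,l]` is
strictly increasing. -/
theorem arg_psi_sq_strictMono
    (l c : ℝ) (hl : 0 < l) (hc : 0 < c)
    (ε : ℝ → ℝ) (hmeas : Measurable ε) (hε : ∀ s, 1 ≤ ε s)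
    (z : ℂ) (hz : (z ^ 2).im < 0)
    (ψ ψ' : ℝ → ℂ)
    (hψ : ∀ s ∈ Icc (0 : ℝ) l, HasDerivAt ψ (ψ' s) s)
    (hψ' : ∀ s ∈ Icc (0 : ℝ) l,
      HasDerivAt ψ' (-(z ^ 2 / (c : ℂ) ^ 2) * (ε s : ℂ) * ψ s) s)
    (h0 : ψ 0 = 0) (h1 : ψ' 0 = 1)
    (hne : ∀ s ∈ Ioc (0 : ℝ) l, ψ s ≠ 0)
    (ξ : ℝ → ℝ) (hξcont : ContinuousOn ξ (Ioc (0 : ℝ) l))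
    (hξarg : ∀ s ∈ Ioc (0 : ℝ) l,
      (ψ s) ^ 2 = (‖(ψ s) ^ 2‖ : ℂ) * Complex.exp ((ξ s : ℂ) * Complex.I)) :
    StrictMonoOn ξ (Ioc (0 : ℝ) l) :=
  arg_psi_sq_strictMono_general l c hc ε hε z hz ψ ψ' hψ hψ' h0 hne ξ hξcont hξarg
end

section
/- Let ε, c, z, ψ be as above with Im(z²) < 0, ψ(0)=0, ψ'(0)=1. Define g(s) = 2·Im(ψ'(s)·conj(ψ(s))). Then g(0) = 0 and g'(s) = -2·c⁻²·ε(s)·|ψ(s)|²·Im(z²) ≥ 0, with strict inequality whenever ψ(s) ≠ 0; consequently g(s) > 0 for all s ∈ (0,l]. -/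
open Set Complex Filter Topology ComplexConjugate

/-!
Since `ψ' conj ψ'` is real, `(Im (ψ' conj ψ))' = Im (ψ'' conj ψ) = -c⁻² ε |ψ|² Im z²`, which is
nonnegative and vanishes only at zeros of `ψ`. Hence `g` is nondecreasing from `g 0 = 0`; and as
`ψ' 0 = 1`, `ψ` is nonzero at points arbitrarily close to `0` on the right, where `g` strictly
increases, so `g > 0` on `(0, l]`.
-/

theorem HasDerivAt.im_mul_conj {ψ ψ' : ℝ → ℂ} {ψ'' : ℂ} {s : ℝ}
    (hψ : HasDerivAt ψ (ψ' s) s) (hψ' : HasDerivAt ψ' ψ'' s) :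
    HasDerivAt (fun t => (ψ' t * conj (ψ t)).im) (ψ'' * conj (ψ s)).im s := by
  have hprod : HasDerivAt (fun t => ψ' t * conj (ψ t))
      (ψ'' * conj (ψ s) + ψ' s * conj (ψ' s)) s := hψ'.mul hψ.star
  have him : (ψ'' * conj (ψ s) + ψ' s * conj (ψ' s)).im = (ψ'' * conj (ψ s)).im := by
    simp [mul_conj]
  exact him ▸ imCLM.hasFDerivAt.comp_hasDerivAt s hprod

theorem im_mul_ofReal_mul_mul_conj (w : ℂ) (r : ℝ) (x : ℂ) :
    (w * r * x * conj x).im = w.im * r * ‖x‖ ^ 2 := by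
  rw [mul_assoc, mul_conj, normSq_eq_norm_sq, mul_assoc, ← ofReal_mul, im_mul_ofReal, mul_assoc]

theorem monotoneOn_Icc_of_hasDerivAt_nonneg {g g' : ℝ → ℝ} {a b : ℝ}
    (hg : ∀ x ∈ Icc a b, HasDerivAt g (g' x) x) (hg' : ∀ x ∈ Icc a b, 0 ≤ g' x) :
    MonotoneOn g (Icc a b) :=
  monotoneOn_of_hasDerivWithinAt_nonneg (convex_Icc a b)
    (fun x hx => (hg x hx).continuousAt.continuousWithinAt)
    (fun x hx => (hg x (interior_subset hx)).hasDerivWithinAt)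
    (fun x hx => hg' x (interior_subset hx))

theorem MonotoneOn.lt_of_hasDerivAt_pos {g : ℝ → ℝ} {g' a b t : ℝ}
    (hmono : MonotoneOn g (Icc a b)) (ht : t ∈ Ioo a b) (hg : HasDerivAt g g' t)
    (hg' : 0 < g') : g a < g b := by
  have hab : a ≤ b := (ht.1.trans ht.2).le
  refine (hmono (left_mem_Icc.2 hab) (right_mem_Icc.2 hab) hab).lt_of_ne fun heq => hg'.ne' ?_
  have hconst : g =ᶠ[𝓝 t] fun _ => g a := by
    filter_upwards [isOpen_Ioo.mem_nhds ht] with u hu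
    have hu' : u ∈ Icc a b := Ioo_subset_Icc_self hu
    exact le_antisymm (heq ▸ hmono hu' (right_mem_Icc.2 hab) hu.2.le)
      (hmono (left_mem_Icc.2 hab) hu' hu.1.le)
  exact hg.unique ((hasDerivAt_const t (g a)).congr_of_eventuallyEq hconst)

theorem HasDerivAt.exists_mem_Ioo_ne {E : Type*} [NormedAddCommGroup E] [NormedSpace ℝ E]
    {f : ℝ → E} {f' : E} {a b : ℝ} (hf : HasDerivAt f f' a) (hf' : f' ≠ 0) (hab : a < b) :
    ∃ t ∈ Ioo a b, f t ≠ f a :=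
  (Eventually.and (Ioo_mem_nhdsGT hab)
    ((hf.eventually_ne hf').filter_mono (nhdsGT_le_nhdsNE a))).exists

theorem g_properties_general
    (l c : ℝ) (hc : 0 < c)
    (ε : ℝ → ℝ) (hε : ∀ s, 1 ≤ ε s)
    (z : ℂ) (hz : (z ^ 2).im < 0)
    (ψ ψ' : ℝ → ℂ)
    (hψ : ∀ s ∈ Icc (0 : ℝ) l, HasDerivAt ψ (ψ' s) s)
    (hψ' : ∀ s ∈ Icc (0 : ℝ) l,
      HasDerivAt ψ' (-(z ^ 2 / (c : ℂ) ^ 2) * (ε s : ℂ) * ψ s) s)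
    (h0 : ψ 0 = 0) (h1 : ψ' 0 = 1)
    (g : ℝ → ℝ) (hg : ∀ s, g s = 2 * (ψ' s * (starRingEnd ℂ) (ψ s)).im) :
    g 0 = 0 ∧
    (∀ s ∈ Icc (0 : ℝ) l,
      HasDerivAt g (-2 * c⁻¹ ^ 2 * ε s * ‖ψ s‖ ^ 2 * (z ^ 2).im) s ∧
      0 ≤ -2 * c⁻¹ ^ 2 * ε s * ‖ψ s‖ ^ 2 * (z ^ 2).im ∧
      (ψ s ≠ 0 → 0 < -2 * c⁻¹ ^ 2 * ε s * ‖ψ s‖ ^ 2 * (z ^ 2).im)) ∧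
    (∀ s ∈ Ioc (0 : ℝ) l, 0 < g s) := by
  have hcoef : ∀ s, 0 < 2 * c⁻¹ ^ 2 * ε s * -(z ^ 2).im := fun s =>
    mul_pos (mul_pos (by positivity) (by linarith [hε s])) (by linarith)
  have hrate : ∀ s, -2 * c⁻¹ ^ 2 * ε s * ‖ψ s‖ ^ 2 * (z ^ 2).im =
      2 * c⁻¹ ^ 2 * ε s * -(z ^ 2).im * ‖ψ s‖ ^ 2 := fun s => by ring
  have hderiv : ∀ s ∈ Icc (0 : ℝ) l,
      HasDerivAt g (-2 * c⁻¹ ^ 2 * ε s * ‖ψ s‖ ^ 2 * (z ^ 2).im) s := fun s hs => by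
    rw [funext hg]
    have h := ((hψ s hs).im_mul_conj (hψ' s hs)).const_mul 2
    rwa [im_mul_ofReal_mul_mul_conj, neg_im, ← ofReal_pow, div_ofReal_im,
      show 2 * (-((z ^ 2).im / c ^ 2) * ε s * ‖ψ s‖ ^ 2) =
        -2 * c⁻¹ ^ 2 * ε s * ‖ψ s‖ ^ 2 * (z ^ 2).im by ring] at h
  have hrate_nonneg : ∀ s, 0 ≤ -2 * c⁻¹ ^ 2 * ε s * ‖ψ s‖ ^ 2 * (z ^ 2).im := fun s =>
    hrate s ▸ mul_nonneg (hcoef s).le (sq_nonneg _)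
  have hrate_pos : ∀ s, ψ s ≠ 0 → 0 < -2 * c⁻¹ ^ 2 * ε s * ‖ψ s‖ ^ 2 * (z ^ 2).im :=
    fun s hs => hrate s ▸ mul_pos (hcoef s) (pow_pos (norm_pos_iff.2 hs) 2)
  have hg0 : g 0 = 0 := by simp [hg, h0]
  refine ⟨hg0, fun s hs => ⟨hderiv s hs, hrate_nonneg s, hrate_pos s⟩, fun s hs => ?_⟩
  have hsub : Icc 0 s ⊆ Icc 0 l := Icc_subset_Icc_right hs.2
  obtain ⟨t, ht, hψt⟩ := (hψ 0 (hsub (left_mem_Icc.2 hs.1.le))).exists_mem_Ioo_ne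
    (h1 ▸ one_ne_zero) hs.1
  have hmono : MonotoneOn g (Icc 0 s) :=
    monotoneOn_Icc_of_hasDerivAt_nonneg (fun x hx => hderiv x (hsub hx))
      (fun x _ => hrate_nonneg x)
  calc 0 = g 0 := hg0.symm
    _ < g s := hmono.lt_of_hasDerivAt_pos ht (hderiv t (hsub (Ioo_subset_Icc_self ht)))
        (hrate_pos t (h0 ▸ hψt))

/-- For `g(s) = 2·Im(ψ'(s)·conj ψ(s))`: `g(0) = 0`,
`g'(s) = -2 c⁻² ε(s) |ψ(s)|² Im(z²) ≥ 0`, strictly when `ψ(s) ≠ 0`, and `g > 0` on `(0,l]`. -/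
theorem g_properties
    (l c : ℝ) (hl : 0 < l) (hc : 0 < c)
    (ε : ℝ → ℝ) (hmeas : Measurable ε) (hε : ∀ s, 1 ≤ ε s)
    (z : ℂ) (hz : (z ^ 2).im < 0)
    (ψ ψ' : ℝ → ℂ)
    (hψ : ∀ s ∈ Icc (0 : ℝ) l, HasDerivAt ψ (ψ' s) s)
    (hψ' : ∀ s ∈ Icc (0 : ℝ) l,
      HasDerivAt ψ' (-(z ^ 2 / (c : ℂ) ^ 2) * (ε s : ℂ) * ψ s) s)
    (h0 : ψ 0 = 0) (h1 : ψ' 0 = 1)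
    (g : ℝ → ℝ) (hg : ∀ s, g s = 2 * (ψ' s * (starRingEnd ℂ) (ψ s)).im) :
    g 0 = 0 ∧
    (∀ s ∈ Icc (0 : ℝ) l,
      HasDerivAt g (-2 * c⁻¹ ^ 2 * ε s * ‖ψ s‖ ^ 2 * (z ^ 2).im) s ∧
      0 ≤ -2 * c⁻¹ ^ 2 * ε s * ‖ψ s‖ ^ 2 * (z ^ 2).im ∧
      (ψ s ≠ 0 → 0 < -2 * c⁻¹ ^ 2 * ε s * ‖ψ s‖ ^ 2 * (z ^ 2).im)) ∧
    (∀ s ∈ Ioc (0 : ℝ) l, 0 < g s) :=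
  g_properties_general l c hc ε hε z hz ψ ψ' hψ hψ' h0 h1 g hg
end

section
/- Every QN eigenvalue ω of an admissible cavity ε satisfies Im ω < 0, i.e., the decay rate β = -Im ω is strictly positive. -/
/-!
Write `μ = -ω²/c²` and `κ = √ε_∞/c`. Multiplying `E'' = μ ε E` by `conj E` and integrating by parts,
the boundary conditions `E(0) = 0`, `E'(l) = iωκ E(l)` give
`iωκ |E(l)|² = -ω² ∫ ε|E|² / c² + ∫ |E'|²`, with `∫ ε|E|² > 0`.
If `Im ω ≥ 0`, the imaginary part forces `Re ω = 0` or `E(l) = 0`, and `Re ω = 0` is excluded by the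
real part. So `E(l) = E'(l) = 0`, and uniqueness for the linear ODE, run backwards from `l`,
gives `E ≡ 0`.
-/

open Set
open MeasureTheory Complex ComplexConjugate Interval

theorem intervalIntegrable_of_hasDerivAt_of_norm_le {F : Type*} [NormedAddCommGroup F]
    [NormedSpace ℝ F] [CompleteSpace F] {f f' : ℝ → F} {a b C : ℝ} (hab : a ≤ b)
    (hf : ∀ s ∈ Icc a b, HasDerivAt f (f' s) s) (hC : ∀ s ∈ Icc a b, ‖f' s‖ ≤ C) :
    IntervalIntegrable f' volume a b := by
  have hae : ∀ᵐ s ∂volume.restrict (Ι a b), deriv f s = f' s ∧ ‖f' s‖ ≤ C := by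
    rw [uIoc_of_le hab]
    refine (ae_restrict_iff' measurableSet_Ioc).2 (Filter.Eventually.of_forall fun s hs => ?_)
    exact ⟨(hf s (Ioc_subset_Icc_self hs)).deriv, hC s (Ioc_subset_Icc_self hs)⟩
  exact (intervalIntegrable_const (c := C)).mono_fun'
    ((aestronglyMeasurable_deriv f _).congr (hae.mono fun s hs => hs.1))
    (hae.mono fun s hs => hs.2)

theorem integral_mul_conj_add_normSq {f f' f'' : ℝ → ℂ} {a b : ℝ} (hab : a ≤ b)
    (hf : ∀ s ∈ Icc a b, HasDerivAt f (f' s) s) (hf' : ∀ s ∈ Icc a b, HasDerivAt f' (f'' s) s)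
    (hf'' : IntervalIntegrable f'' volume a b) :
    ∫ s in a..b, (f'' s * conj (f s) + (normSq (f' s) : ℂ)) =
      f' b * conj (f b) - f' a * conj (f a) := by
  have hf'c : ContinuousOn f' (Icc a b) := HasDerivAt.continuousOn hf'
  have hfc : ContinuousOn f (Icc a b) := HasDerivAt.continuousOn hf
  rw [← uIcc_of_le hab] at hf hf' hf'c hfc
  refine intervalIntegral.integral_eq_sub_of_hasDerivAt (f := fun s => f' s * conj (f s))
    (fun s hs => ?_) ?_
  · rw [← mul_conj]
    exact (hf' s hs).mul (hf s hs).star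
  · exact (hf''.mul_continuousOn (continuous_conj.comp_continuousOn hfc)).add
      (continuous_ofReal.comp_continuousOn
        (continuous_normSq.comp_continuousOn hf'c)).intervalIntegrable

theorem eqOn_zero_of_linear_second_order_of_right_eq_zero {𝕜 F : Type*} [NormedField 𝕜]
    [NormedAddCommGroup F] [NormedSpace ℝ F] [NormedSpace 𝕜 F] {q : ℝ → 𝕜} {K a b : ℝ}
    {f f' : ℝ → F} (hq : ∀ s ∈ Icc a b, ‖q s‖ ≤ K)
    (hf : ∀ s ∈ Icc a b, HasDerivAt f (f' s) s) (hf' : ∀ s ∈ Icc a b, HasDerivAt f' (q s • f s) s)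
    (hfb : f b = 0) (hf'b : f' b = 0) : EqOn f 0 (Icc a b) := by
  set v : ℝ → F × F → F × F := fun t p => (p.2, q t • p.1)
  have hlip : ∀ t ∈ Ioc a b, LipschitzOnWith (max 1 K).toNNReal (v t) univ := by
    intro t ht
    refine (LipschitzWith.of_dist_le_mul fun p p' => ?_).lipschitzOnWith
    rw [Real.coe_toNNReal _ (le_max_of_le_left zero_le_one), Prod.dist_eq, Prod.dist_eq]
    have h1 : dist p.1 p'.1 ≤ dist p p' := by rw [Prod.dist_eq]; exact le_max_left _ _
    have h2 : dist p.2 p'.2 ≤ dist p p' := by rw [Prod.dist_eq]; exact le_max_right _ _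
    have hK : ‖q t‖ ≤ max 1 K := (hq t (Ioc_subset_Icc_self ht)).trans (le_max_right _ _)
    refine max_le (h2.trans (le_mul_of_one_le_left dist_nonneg (le_max_left _ _))) ?_
    calc dist (q t • p.1) (q t • p'.1) = ‖q t‖ * dist p.1 p'.1 := dist_smul₀ _ _ _
      _ ≤ max 1 K * dist p p' := mul_le_mul hK h1 dist_nonneg ((norm_nonneg _).trans hK)
  have key : EqOn (fun t => (f t, f' t)) (fun _ => 0) (Icc a b) := by
    refine ODE_solution_unique_of_mem_Icc_left hlip
      (HasDerivAt.continuousOn fun s hs => (hf s hs).prodMk (hf' s hs))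
      (fun t ht => ((hf t (Ioc_subset_Icc_self ht)).prodMk
        (hf' t (Ioc_subset_Icc_self ht))).hasDerivWithinAt)
      (fun _ _ => mem_univ _) continuousOn_const (fun t _ => ?_) (fun _ _ => mem_univ _) ?_
    · convert hasDerivWithinAt_const t (Iic t) (0 : F × F) using 1
      simp [v]
    · simp [hfb, hf'b]
  exact fun s hs => congrArg Prod.fst (key hs)

theorem integral_weight_mul_normSq_pos {a b δ : ℝ} {w : ℝ → ℝ} {E : ℝ → ℂ} (hab : a < b)
    (hδ : 0 < δ) (hwδ : ∀ s ∈ Icc a b, δ ≤ w s)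
    (hint : IntervalIntegrable (fun s => w s * normSq (E s)) volume a b)
    (hE : ContinuousOn E (Icc a b)) (hE0 : ∃ s ∈ Icc a b, E s ≠ 0) :
    0 < ∫ s in a..b, w s * normSq (E s) := by
  obtain ⟨s₀, hs₀, hEs₀⟩ := hE0
  have hδE : ContinuousOn (fun s => δ * normSq (E s)) (Icc a b) :=
    continuousOn_const.mul (continuous_normSq.comp_continuousOn hE)
  calc 0 < ∫ s in a..b, δ * normSq (E s) :=
        intervalIntegral.integral_pos hab hδE (fun s _ => mul_nonneg hδ.le (normSq_nonneg _))
          ⟨s₀, hs₀, mul_pos hδ (normSq_pos.2 hEs₀)⟩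
    _ ≤ ∫ s in a..b, w s * normSq (E s) :=
        intervalIntegral.integral_mono_on hab.le (hδE.intervalIntegrable_of_Icc hab.le) hint
          fun s hs => mul_le_mul_of_nonneg_right (hwδ s hs) (normSq_nonneg _)

section WeightedEquation

variable {a b K : ℝ} {μ : ℂ} {w : ℝ → ℝ} {E E' : ℝ → ℂ}

theorem intervalIntegrable_mul_weight_mul (hab : a ≤ b) (hw : ∀ s ∈ Icc a b, |w s| ≤ K)
    (hE : ∀ s ∈ Icc a b, HasDerivAt E (E' s) s)
    (hE' : ∀ s ∈ Icc a b, HasDerivAt E' (μ * w s * E s) s) :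
    IntervalIntegrable (fun s => μ * w s * E s) volume a b := by
  obtain ⟨C, hC⟩ := isCompact_Icc.exists_bound_of_continuousOn (HasDerivAt.continuousOn hE)
  refine intervalIntegrable_of_hasDerivAt_of_norm_le hab hE' (C := ‖μ‖ * K * C) fun s hs => ?_
  have hK : 0 ≤ K := (abs_nonneg _).trans (hw s hs)
  rw [norm_mul, norm_mul, norm_real, Real.norm_eq_abs]
  gcongr
  exacts [hw s hs, hC s hs]

theorem weight_mul_normSq_eq (s : ℝ) :
    μ * w s * E s * conj (E s) = μ * ((w s * normSq (E s) : ℝ) : ℂ) := by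
  rw [mul_assoc, mul_conj]
  push_cast
  ring

theorem intervalIntegrable_weight_mul_normSq (hab : a ≤ b) (hμ : μ ≠ 0)
    (hw : ∀ s ∈ Icc a b, |w s| ≤ K) (hE : ∀ s ∈ Icc a b, HasDerivAt E (E' s) s)
    (hE' : ∀ s ∈ Icc a b, HasDerivAt E' (μ * w s * E s) s) :
    IntervalIntegrable (fun s => w s * normSq (E s)) volume a b := by
  have hEc : ContinuousOn E (uIcc a b) := by
    rw [uIcc_of_le hab]
    exact HasDerivAt.continuousOn hE
  have hint : IntervalIntegrable (fun s => μ⁻¹ * (μ * w s * E s * conj (E s))) volume a b :=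
    ((intervalIntegrable_mul_weight_mul hab hw hE hE').mul_continuousOn
      (continuous_conj.comp_continuousOn hEc)).const_mul μ⁻¹
  -- `w` need not be measurable: integrability comes from `w |E|² = Re (μ⁻¹ E'' conj E)`.
  have hre : ∀ s, RCLike.re (μ⁻¹ * (μ * w s * E s * conj (E s))) = w s * normSq (E s) := by
    intro s
    rw [weight_mul_normSq_eq, inv_mul_cancel_left₀ hμ]
    rfl
  have hIoc := hint.1.re
  have hIoc' := hint.2.re
  simp only [hre] at hIoc hIoc'
  exact ⟨hIoc, hIoc'⟩

theorem weighted_green_identity (hab : a ≤ b) (hw : ∀ s ∈ Icc a b, |w s| ≤ K)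
    (hE : ∀ s ∈ Icc a b, HasDerivAt E (E' s) s)
    (hE' : ∀ s ∈ Icc a b, HasDerivAt E' (μ * w s * E s) s) :
    E' b * conj (E b) - E' a * conj (E a) =
      μ * ↑(∫ s in a..b, w s * normSq (E s)) + ↑(∫ s in a..b, normSq (E' s)) := by
  have hint := intervalIntegrable_mul_weight_mul hab hw hE hE'
  have hEc : ContinuousOn E (uIcc a b) := by
    rw [uIcc_of_le hab]
    exact HasDerivAt.continuousOn hE
  have hE'c : ContinuousOn E' (uIcc a b) := by
    rw [uIcc_of_le hab]
    exact HasDerivAt.continuousOn hE'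
  have hint₁ : IntervalIntegrable (fun s => μ * w s * E s * conj (E s)) volume a b :=
    hint.mul_continuousOn (continuous_conj.comp_continuousOn hEc)
  have hint₂ : IntervalIntegrable (fun s => (normSq (E' s) : ℂ)) volume a b :=
    (continuous_ofReal.comp_continuousOn
      (continuous_normSq.comp_continuousOn hE'c)).intervalIntegrable
  rw [← integral_mul_conj_add_normSq hab hE hE' hint, intervalIntegral.integral_add hint₁ hint₂]
  simp only [weight_mul_normSq_eq, intervalIntegral.integral_const_mul,
    intervalIntegral.integral_ofReal]

end WeightedEquation

theorem im_neg_or_eq_zero_of_I_mul_eq {ω : ℂ} (hω : ω ≠ 0) {κ A B M : ℝ} (hκ : 0 < κ)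
    (hA : 0 < A) (hB : 0 ≤ B) (hM : 0 ≤ M) (h : I * ω * κ * M = -ω ^ 2 * A + B) :
    ω.im < 0 ∨ M = 0 := by
  have hre := congrArg re h
  have him := congrArg im h
  simp only [pow_two, mul_re, mul_im, add_re, add_im, neg_re, neg_im, I_re, I_im, ofReal_re,
    ofReal_im] at hre him
  rw [or_iff_not_imp_left, not_lt]
  intro hb
  rcases eq_or_ne ω.re 0 with ha | ha
  · have hb' : 0 < ω.im := hb.lt_of_ne fun h0 => hω (Complex.ext ha h0.symm)
    rw [ha] at hre
    nlinarith [mul_pos (mul_pos hb' hb') hA, mul_nonneg (mul_nonneg hb'.le hκ.le) hM]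
  · have hfactor : ω.re * (κ * M + 2 * ω.im * A) = 0 := by linear_combination him
    have := (mul_eq_zero.1 hfactor).resolve_left ha
    nlinarith [mul_nonneg hb hA.le, mul_nonneg hκ.le hM]

theorem QN_eigenvalue_im_neg_general
    (l c ε₁ ε₂ εoo : ℝ) (hl : 0 < l) (hc : 0 < c)
    (hε₁ : 1 ≤ ε₁) (hεoo : 1 ≤ εoo)
    (ε : ℝ → ℝ) (hεb : ∀ s, ε₁ ≤ ε s ∧ ε s ≤ ε₂)
    (ω : ℂ) (hω : ω ≠ 0)
    (E E' : ℝ → ℂ)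
    (hE : ∀ s ∈ Icc (0 : ℝ) l, HasDerivAt E (E' s) s)
    (hE' : ∀ s ∈ Icc (0 : ℝ) l,
      HasDerivAt E' (-(ω ^ 2 / (c : ℂ) ^ 2) * (ε s : ℂ) * E s) s)
    (h0 : E 0 = 0)
    (hbc : Complex.I * ω * ((Real.sqrt εoo / c : ℝ) : ℂ) * E l = E' l)
    (hnontriv : ∃ s ∈ Icc (0 : ℝ) l, E s ≠ 0) :
    ω.im < 0 := by
  obtain ⟨s₀, hs₀, hEs₀⟩ := hnontriv
  set μ : ℂ := -(ω ^ 2 / (c : ℂ) ^ 2)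
  have hμ : μ ≠ 0 := by simp [μ, hω, hc.ne']
  have hε : ∀ s ∈ Icc 0 l, |ε s| ≤ ε₂ := fun s _ => abs_le.2 ⟨by linarith [hεb s], (hεb s).2⟩
  have hA : 0 < ∫ s in 0..l, ε s * normSq (E s) :=
    integral_weight_mul_normSq_pos hl (by linarith) (fun s _ => (hεb s).1)
      (intervalIntegrable_weight_mul_normSq hl.le hμ hε hE hE')
      (HasDerivAt.continuousOn hE) ⟨s₀, hs₀, hEs₀⟩
  have hgreen := weighted_green_identity hl.le hε hE hE'
  rw [h0, ← hbc, map_zero, mul_zero, sub_zero, mul_assoc _ (E l), mul_conj] at hgreen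
  have hquad : I * ω * ↑(√εoo / c) * ↑(normSq (E l)) =
      -ω ^ 2 * ↑((∫ s in 0..l, ε s * normSq (E s)) / c ^ 2) + ↑(∫ s in 0..l, normSq (E' s)) := by
    rw [hgreen]
    push_cast
    ring
  refine (im_neg_or_eq_zero_of_I_mul_eq hω (by positivity) (by positivity)
    (intervalIntegral.integral_nonneg hl.le fun s _ => normSq_nonneg _) (normSq_nonneg _)
    hquad).resolve_right fun hM => hEs₀ ?_
  have hEl : E l = 0 := normSq_eq_zero.1 hM
  exact eqOn_zero_of_linear_second_order_of_right_eq_zero (q := fun s => μ * ε s)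
    (fun s hs => by simpa [abs_mul] using mul_le_mul_of_nonneg_left (hε s hs) (norm_nonneg μ))
    hE hE' hEl (by rw [← hbc, hEl, mul_zero]) hs₀

/-- Every QN eigenvalue `ω` of an admissible cavity satisfies `Im ω < 0`:
the decay rate `β = -Im ω` is strictly positive. -/
theorem QN_eigenvalue_im_neg
    (l c ε₁ ε₂ εoo : ℝ) (hl : 0 < l) (hc : 0 < c)
    (hε₁ : 1 ≤ ε₁) (h12 : ε₁ < ε₂) (hεoo : 1 ≤ εoo)
    (ε : ℝ → ℝ) (hεb : ∀ s, ε₁ ≤ ε s ∧ ε s ≤ ε₂)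
    (ω : ℂ) (hω : ω ≠ 0)
    (E E' : ℝ → ℂ)
    (hE : ∀ s ∈ Icc (0 : ℝ) l, HasDerivAt E (E' s) s)
    (hE' : ∀ s ∈ Icc (0 : ℝ) l,
      HasDerivAt E' (-(ω ^ 2 / (c : ℂ) ^ 2) * (ε s : ℂ) * E s) s)
    (h0 : E 0 = 0)
    (hbc : Complex.I * ω * ((Real.sqrt εoo / c : ℝ) : ℂ) * E l = E' l)
    (hnontriv : ∃ s ∈ Icc (0 : ℝ) l, E s ≠ 0) :
    ω.im < 0 :=
  QN_eigenvalue_im_neg_general l c ε₁ ε₂ εoo hl hc hε₁ hεoo ε hεb ω hω E E' hE hE' h0 hbc hnontriv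
end

section
/- Let ε be an admissible cavity and ω a QN eigenvalue with mode ψ = ψ(·,ω;ε) normalized by ψ(0)=0, ψ'(0)=1. Define F(z;ε) = iz(√ε_∞/c)ψ(l,z;ε) - ∂_s ψ(l,z;ε). Then ∂_z F(ω;ε) = (2ω/(c²ψ(l,ω;ε)))·∫₀^l ψ²(s,ω;ε)ε(s) ds + i(√ε_∞/c)ψ(l,ω;ε). In particular, ω is a degenerate QN eigenvalue (multiplicity ≥ 2 as zero of F) if and only if ∫₀^l ψ²(s,ω;ε)ε(s) ds + i(c√ε_∞/(2ω))·ψ²(l,ω;ε) = 0. -/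
open Set intervalIntegral

open MeasureTheory Filter Topology Real NNReal

/-!
The Wronskian of `ψ(·, z)` and `ψ(·, ω)` vanishes at `s = 0` and has derivative
`(z² - ω²)/c² · ε ψ(·, z) ψ(·, ω)`, so at `s = l` it equals
`(z² - ω²)/c² · ∫₀^l ψ(·, z) ψ(·, ω) ε`. Together with the boundary condition
`∂ₛψ(l, ω) = i ω √ε∞/c · ψ(l, ω)` expressing `F(ω) = 0`, this factors
`F(z) = (z - ω) H(z)` with
`H(z) = i √ε∞/c · ψ(l, z) + (z + ω)/(c² ψ(l, ω)) · ∫₀^l ψ(·, z) ψ(·, ω) ε`.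
By Grönwall, `ψ(·, z) → ψ(·, ω)` uniformly on `[0, l]` as `z → ω`, so `H` is continuous at `ω`
and `F'(ω) = H(ω)`.
-/

theorem hasDerivAt_of_sub_eq_sub_mul {𝕜 : Type*} [NontriviallyNormedField 𝕜] {f g : 𝕜 → 𝕜}
    {x : 𝕜} (hfg : ∀ y, f y - f x = (y - x) * g y) (hg : ContinuousAt g x) :
    HasDerivAt f (g x) x := by
  rw [hasDerivAt_iff_tendsto_slope]
  refine (hg.tendsto.mono_left nhdsWithin_le_nhds).congr' ?_
  filter_upwards [self_mem_nhdsWithin] with y hy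
  rw [slope_def_field, hfg, mul_div_cancel_left₀ _ (sub_ne_zero.2 hy)]

theorem gronwallBound_zero_le_mul_exp {K ε x : ℝ} (hK : 1 ≤ K) (hε : 0 ≤ ε) (hx : 0 ≤ x) :
    gronwallBound 0 K ε x ≤ ε * exp (K * x) := by
  simp only [gronwallBound_of_K_ne_0 (by positivity : K ≠ 0), zero_mul, zero_add]
  have hexp : 1 ≤ exp (K * x) := one_le_exp (by positivity)
  gcongr
  · exact div_le_self hε hK
  · linarith

theorem lipschitzWith_companion (c : ℂ) :
    LipschitzWith (max 1 ‖c‖₊) fun p : ℂ × ℂ => (p.2, c * p.1) := by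
  simpa only [mul_one] using (LipschitzWith.prod_snd.prodMk
    ((lipschitzWith_smul c).comp LipschitzWith.prod_fst) :
      LipschitzWith _ fun p : ℂ × ℂ => (p.2, c * p.1))

def IsHelmholtzSolution (ρ : ℝ → ℂ) (μ : ℂ) (a b : ℝ) (u u' : ℝ → ℂ) : Prop :=
  ∀ s ∈ Icc a b, HasDerivAt u (u' s) s ∧ HasDerivAt u' (-μ * ρ s * u s) s

namespace IsHelmholtzSolution

variable {ρ : ℝ → ℂ} {μ ν : ℂ} {a b B M : ℝ} {u u' v v' : ℝ → ℂ}

theorem continuousOn (h : IsHelmholtzSolution ρ μ a b u u') : ContinuousOn u (Icc a b) :=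
  fun s hs => (h s hs).1.continuousAt.continuousWithinAt

theorem hasDerivAt_prodMk (h : IsHelmholtzSolution ρ μ a b u u') {s : ℝ} (hs : s ∈ Icc a b) :
    HasDerivAt (fun t => (u t, u' t)) (u' s, -μ * ρ s * u s) s :=
  (h s hs).1.prodMk (h s hs).2

theorem continuousOn_prodMk (h : IsHelmholtzSolution ρ μ a b u u') :
    ContinuousOn (fun t => (u t, u' t)) (Icc a b) :=
  fun _ hs => (h.hasDerivAt_prodMk hs).continuousAt.continuousWithinAt

theorem wronskian_sub_wronskian (hu : IsHelmholtzSolution ρ μ a b u u')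
    (hv : IsHelmholtzSolution ρ ν a b v v') (hab : a ≤ b) (hρ : IntegrableOn ρ (Icc a b)) :
    (u b * v' b - u' b * v b) - (u a * v' a - u' a * v a)
      = (μ - ν) * ∫ s in a..b, u s * (v s * ρ s) := by
  have hW : ∀ s ∈ uIcc a b, HasDerivAt (fun s => u s * v' s - u' s * v s)
      ((μ - ν) * (u s * (v s * ρ s))) s := by
    intro s hs
    rw [uIcc_of_le hab] at hs
    exact (((hu s hs).1.mul (hv s hs).2).sub ((hu s hs).2.mul (hv s hs).1)).congr_deriv
      (by ring)
  have hint : IntervalIntegrable (fun s => u s * (v s * ρ s)) volume a b :=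
    (intervalIntegrable_iff_integrableOn_Icc_of_le hab).2
      ((hρ.continuousOn_mul hv.continuousOn isCompact_Icc).continuousOn_mul hu.continuousOn
        isCompact_Icc)
  rw [← intervalIntegral.integral_const_mul, integral_eq_sub_of_hasDerivAt hW (hint.const_mul _)]

theorem norm_sub_le (hu : IsHelmholtzSolution ρ μ a b u u')
    (hv : IsHelmholtzSolution ρ ν a b v v') (hρ : ∀ s ∈ Icc a b, ‖ρ s‖ ≤ B)
    (hM : ∀ s ∈ Icc a b, ‖u s‖ ≤ M) (ha : u a = v a) (ha' : u' a = v' a) :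
    ∀ s ∈ Icc a b, ‖u s - v s‖ ≤ ‖μ - ν‖ * B * M * exp (max 1 (‖ν‖ * B) * (b - a)) := by
  -- `(u, u')` is an approximate trajectory of the first-order system of `v`'s equation, with
  -- defect `‖μ - ν‖ B M`; that system's field is `max 1 (‖ν‖ B)`-Lipschitz.
  intro s hs
  have hB : 0 ≤ B := (norm_nonneg _).trans (hρ a ⟨le_rfl, hs.1.trans hs.2⟩)
  have hM₀ : 0 ≤ M := (norm_nonneg _).trans (hM a ⟨le_rfl, hs.1.trans hs.2⟩)
  let K : ℝ≥0 := ⟨max 1 (‖ν‖ * B), zero_le_one.trans (le_max_left _ _)⟩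
  have hK : (K : ℝ) = max 1 (‖ν‖ * B) := rfl
  have hlip : ∀ t ∈ Ico a b,
      LipschitzOnWith K (fun p : ℂ × ℂ => (p.2, -ν * ρ t * p.1)) univ := by
    intro t ht
    refine ((lipschitzWith_companion _).weaken ?_).lipschitzOnWith
    rw [← NNReal.coe_le_coe, NNReal.coe_max, NNReal.coe_one, coe_nnnorm, hK]
    gcongr
    simpa [norm_mul] using mul_le_mul_of_nonneg_left (hρ t (Ico_subset_Icc_self ht))
      (norm_nonneg ν)
  have hdefect : ∀ t ∈ Ico a b, dist (u' t, -μ * ρ t * u t) (u' t, -ν * ρ t * u t)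
      ≤ ‖μ - ν‖ * B * M := by
    intro t ht
    have ht' := Ico_subset_Icc_self ht
    rw [Prod.dist_eq, dist_self, dist_eq_norm,
      show -μ * ρ t * u t - -ν * ρ t * u t = -((μ - ν) * ρ t * u t) by ring, norm_neg,
      norm_mul, norm_mul, max_eq_right (by positivity)]
    gcongr
    exacts [hρ t ht', hM t ht']
  have hgron := dist_le_of_approx_trajectories_ODE_of_mem hlip hu.continuousOn_prodMk
    (fun t ht => (hu.hasDerivAt_prodMk (Ico_subset_Icc_self ht)).hasDerivWithinAt) hdefect
    (fun _ _ => trivial) hv.continuousOn_prodMk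
    (fun t ht => (hv.hasDerivAt_prodMk (Ico_subset_Icc_self ht)).hasDerivWithinAt)
    (fun t _ => (dist_self _).le) (fun _ _ => trivial)
    (by simp [ha, ha'] : dist (u a, u' a) (v a, v' a) ≤ 0) s hs
  rw [add_zero, hK] at hgron
  calc ‖u s - v s‖ ≤ dist (u s, u' s) (v s, v' s) := by
        rw [← dist_eq_norm, Prod.dist_eq]; exact le_max_left _ _
    _ ≤ ‖μ - ν‖ * B * M * exp (max 1 (‖ν‖ * B) * (s - a)) :=
        hgron.trans (gronwallBound_zero_le_mul_exp (le_max_left _ _) (by positivity)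
          (sub_nonneg.2 hs.1))
    _ ≤ ‖μ - ν‖ * B * M * exp (max 1 (‖ν‖ * B) * (b - a)) := by
        gcongr
        exact hs.2

theorem tendstoUniformlyOn_of_tendsto {ι : Type*} {l : Filter ι} {μ : ι → ℂ}
    {u u' : ι → ℝ → ℂ} {i₀ : ι} (hu : ∀ i, IsHelmholtzSolution ρ (μ i) a b (u i) (u' i))
    (hμ : Tendsto μ l (𝓝 (μ i₀))) (hρ : ∀ s ∈ Icc a b, ‖ρ s‖ ≤ B)
    (ha : ∀ i, u i a = u i₀ a) (ha' : ∀ i, u' i a = u' i₀ a) :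
    TendstoUniformlyOn u (u i₀) l (Icc a b) := by
  obtain ⟨M, hM⟩ := isCompact_Icc.exists_bound_of_continuousOn (hu i₀).continuousOn
  let β : ℂ → ℝ := fun ν => ‖μ i₀ - ν‖ * B * M * exp (max 1 (‖ν‖ * B) * (b - a))
  have hβ : Tendsto (fun i => β (μ i)) l (𝓝 0) := by
    have hβc : Continuous β := by fun_prop
    simpa [β, Function.comp_def] using (hβc.tendsto (μ i₀)).comp hμ
  rw [Metric.tendstoUniformlyOn_iff]
  intro η hη
  filter_upwards [hβ.eventually (gt_mem_nhds hη)] with i hi s hs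
  rw [dist_eq_norm]
  exact ((hu i₀).norm_sub_le (hu i) hρ hM (ha i).symm (ha' i).symm s hs).trans_lt hi

end IsHelmholtzSolution

theorem TendstoUniformlyOn.tendsto_intervalIntegral_mul {ι : Type*} {l : Filter ι}
    {F : ι → ℝ → ℂ} {f g : ℝ → ℂ} {a b : ℝ} (hab : a ≤ b)
    (hF : TendstoUniformlyOn F f l (Icc a b)) (hFc : ∀ i, ContinuousOn (F i) (Icc a b))
    (hfc : ContinuousOn f (Icc a b)) (hg : IntegrableOn g (Icc a b)) :
    Tendsto (fun i => ∫ s in a..b, F i s * g s) l (𝓝 (∫ s in a..b, f s * g s)) := by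
  have hint : ∀ {h : ℝ → ℂ}, ContinuousOn h (Icc a b) →
      IntervalIntegrable (fun s => h s * g s) volume a b := fun hh =>
    (intervalIntegrable_iff_integrableOn_Icc_of_le hab).2 (hg.continuousOn_mul hh isCompact_Icc)
  set I := ∫ s in a..b, ‖g s‖
  have hI : 0 ≤ I := intervalIntegral.integral_nonneg hab fun _ _ => norm_nonneg _
  rw [Metric.tendstoUniformlyOn_iff] at hF
  rw [Metric.tendsto_nhds]
  intro η hη
  filter_upwards [hF (η / (I + 1)) (by positivity)] with i hi
  rw [dist_eq_norm, ← integral_sub (hint (hFc i)) (hint hfc)]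
  calc ‖∫ s in a..b, F i s * g s - f s * g s‖ ≤ ∫ s in a..b, η / (I + 1) * ‖g s‖ := by
        refine norm_integral_le_of_norm_le hab (ae_of_all _ fun s hs => ?_)
          (((intervalIntegrable_iff_integrableOn_Icc_of_le hab).2 hg.norm).const_mul _)
        rw [← sub_mul, norm_mul, ← dist_eq_norm, dist_comm]
        exact mul_le_mul_of_nonneg_right (hi s (Ioc_subset_Icc_self hs)).le (norm_nonneg _)
    _ = η / (I + 1) * I := intervalIntegral.integral_const_mul _ _
    _ < η := by
        rw [div_mul_eq_mul_div, div_lt_iff₀ (by positivity)]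
        nlinarith

theorem impedance_eq_sub_mul {ρ : ℝ → ℂ} {l c : ℝ} {κ ω z : ℂ}
    {Ψ Ψs : ℂ → ℝ → ℂ} (hsol : ∀ z, IsHelmholtzSolution ρ (z ^ 2 / (c : ℂ) ^ 2) 0 l (Ψ z) (Ψs z))
    (h0 : ∀ z, Ψ z 0 = 0) (hl : 0 ≤ l) (hρ : IntegrableOn ρ (Icc 0 l)) (hc : (c : ℂ) ≠ 0)
    (hψl : Ψ ω l ≠ 0) (hbd : Ψs ω l = Complex.I * ω * κ * Ψ ω l) :
    Complex.I * z * κ * Ψ z l - Ψs z l = (z - ω) * (Complex.I * κ * Ψ z l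
      + (z + ω) * (∫ s in 0..l, Ψ z s * (Ψ ω s * ρ s)) / ((c : ℂ) ^ 2 * Ψ ω l)) := by
  have hW := (hsol z).wronskian_sub_wronskian (hsol ω) hl hρ
  simp only [h0, zero_mul, mul_zero, sub_zero] at hW
  generalize (∫ s in 0..l, Ψ z s * (Ψ ω s * ρ s)) = G at hW ⊢
  field_simp at hW ⊢
  linear_combination hW - c ^ 2 * Ψ z l * hbd

theorem deriv_F_and_degeneracy_general
    (l c ε₁ ε₂ εoo : ℝ) (hl : 0 < l) (hc : 0 < c)
    (ε : ℝ → ℝ) (hmeas : Measurable ε) (hεb : ∀ s, ε₁ ≤ ε s ∧ ε s ≤ ε₂)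
    (Ψ Ψs : ℂ → ℝ → ℂ)
    (hd1 : ∀ z, ∀ s ∈ Icc (0 : ℝ) l, HasDerivAt (Ψ z) (Ψs z s) s)
    (hd2 : ∀ z, ∀ s ∈ Icc (0 : ℝ) l,
      HasDerivAt (Ψs z) (-(z ^ 2 / (c : ℂ) ^ 2) * (ε s : ℂ) * Ψ z s) s)
    (h0 : ∀ z, Ψ z 0 = 0) (h1 : ∀ z, Ψs z 0 = 1)
    (F : ℂ → ℂ)
    (hF : ∀ z, F z = Complex.I * z * ((Real.sqrt εoo / c : ℝ) : ℂ) * Ψ z l - Ψs z l)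
    (ω : ℂ) (hω : ω ≠ 0) (hFω : F ω = 0) (hψl : Ψ ω l ≠ 0) :
    HasDerivAt F
      ((2 * ω / ((c : ℂ) ^ 2 * Ψ ω l)) * (∫ s in (0 : ℝ)..l, (Ψ ω s) ^ 2 * (ε s : ℂ))
        + Complex.I * ((Real.sqrt εoo / c : ℝ) : ℂ) * Ψ ω l) ω ∧
    (deriv F ω = 0 ↔
      (∫ s in (0 : ℝ)..l, (Ψ ω s) ^ 2 * (ε s : ℂ))
        + Complex.I * (((c * Real.sqrt εoo : ℝ) : ℂ) / (2 * ω)) * (Ψ ω l) ^ 2 = 0) := by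
  have hsol : ∀ z, IsHelmholtzSolution (fun s => (ε s : ℂ)) (z ^ 2 / (c : ℂ) ^ 2) 0 l
      (Ψ z) (Ψs z) := fun z s hs => ⟨hd1 z s hs, hd2 z s hs⟩
  have hρB : ∀ s ∈ Icc 0 l, ‖(ε s : ℂ)‖ ≤ max |ε₁| |ε₂| := fun s _ => by
    rw [Complex.norm_real, Real.norm_eq_abs]
    exact abs_le_max_abs_abs (hεb s).1 (hεb s).2
  have hρ : IntegrableOn (fun s => (ε s : ℂ)) (Icc 0 l) :=
    .of_bound measure_Icc_lt_top (Complex.measurable_ofReal.comp hmeas).aestronglyMeasurable _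
      (ae_restrict_of_forall_mem measurableSet_Icc hρB)
  have hc₀ : (c : ℂ) ≠ 0 := by exact_mod_cast hc.ne'
  set κ : ℂ := ((Real.sqrt εoo / c : ℝ) : ℂ)
  set G : ℂ → ℂ := fun z => ∫ s in 0..l, Ψ z s * (Ψ ω s * ε s)
  set H : ℂ → ℂ := fun z => Complex.I * κ * Ψ z l + (z + ω) * G z / ((c : ℂ) ^ 2 * Ψ ω l)
  have hbd : Ψs ω l = Complex.I * ω * κ * Ψ ω l := by linear_combination hF ω - hFω
  have hfactor (z : ℂ) : F z - F ω = (z - ω) * H z := by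
    rw [hFω, sub_zero, hF]
    exact impedance_eq_sub_mul hsol h0 hl.le hρ hc₀ hψl hbd
  have hH : ContinuousAt H ω := by
    have hU := IsHelmholtzSolution.tendstoUniformlyOn_of_tendsto hsol
      ((by fun_prop : Continuous fun z : ℂ => z ^ 2 / (c : ℂ) ^ 2).tendsto ω) hρB
      (fun z => by rw [h0, h0]) (fun z => by rw [h1, h1])
    have hG : Tendsto G (𝓝 ω) (𝓝 (G ω)) := hU.tendsto_intervalIntegral_mul hl.le
      (fun z => (hsol z).continuousOn) (hsol ω).continuousOn
      (hρ.continuousOn_mul (hsol ω).continuousOn isCompact_Icc)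
    exact (tendsto_const_nhds.mul (hU.tendsto_at (right_mem_Icc.2 hl.le))).add
      (((tendsto_id.add tendsto_const_nhds).mul hG).div_const _)
  have hHω : H ω = (2 * ω / ((c : ℂ) ^ 2 * Ψ ω l)) * (∫ s in (0 : ℝ)..l, (Ψ ω s) ^ 2 * (ε s : ℂ))
      + Complex.I * κ * Ψ ω l := by
    have hGω : G ω = ∫ s in (0 : ℝ)..l, (Ψ ω s) ^ 2 * (ε s : ℂ) :=
      integral_congr fun s _ => by ring
    rw [← hGω]
    ring
  have hderiv := hasDerivAt_of_sub_eq_sub_mul hfactor hH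
  refine ⟨hHω ▸ hderiv, ?_⟩
  have hHω_factor : (2 * ω / ((c : ℂ) ^ 2 * Ψ ω l)) * (∫ s in (0 : ℝ)..l, (Ψ ω s) ^ 2 * (ε s : ℂ))
      + Complex.I * κ * Ψ ω l = (2 * ω / ((c : ℂ) ^ 2 * Ψ ω l)) *
        ((∫ s in (0 : ℝ)..l, (Ψ ω s) ^ 2 * (ε s : ℂ))
          + Complex.I * (((c * Real.sqrt εoo : ℝ) : ℂ) / (2 * ω)) * (Ψ ω l) ^ 2) := by
    simp only [κ]
    push_cast
    field_simp
  rw [hderiv.deriv, hHω, hHω_factor, mul_eq_zero,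
    or_iff_right (div_ne_zero (by simpa using hω) (by simp [hc₀, hψl]))]

/-- Formula for `∂_z F(ω;ε)` at a QN eigenvalue `ω`, and the degeneracy criterion:
`ω` is a multiple zero of `F` iff `∫₀^l ψ²ε ds + i c√εoo/(2ω) ψ²(l) = 0`. -/
theorem deriv_F_and_degeneracy
    (l c ε₁ ε₂ εoo : ℝ) (hl : 0 < l) (hc : 0 < c)
    (hε₁ : 1 ≤ ε₁) (h12 : ε₁ < ε₂) (hεoo : 1 ≤ εoo)
    (ε : ℝ → ℝ) (hmeas : Measurable ε) (hεb : ∀ s, ε₁ ≤ ε s ∧ ε s ≤ ε₂)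
    (Ψ Ψs : ℂ → ℝ → ℂ)
    (hd1 : ∀ z, ∀ s ∈ Icc (0 : ℝ) l, HasDerivAt (Ψ z) (Ψs z s) s)
    (hd2 : ∀ z, ∀ s ∈ Icc (0 : ℝ) l,
      HasDerivAt (Ψs z) (-(z ^ 2 / (c : ℂ) ^ 2) * (ε s : ℂ) * Ψ z s) s)
    (h0 : ∀ z, Ψ z 0 = 0) (h1 : ∀ z, Ψs z 0 = 1)
    (F : ℂ → ℂ)
    (hF : ∀ z, F z = Complex.I * z * ((Real.sqrt εoo / c : ℝ) : ℂ) * Ψ z l - Ψs z l)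
    (ω : ℂ) (hω : ω ≠ 0) (hFω : F ω = 0) (hψl : Ψ ω l ≠ 0) :
    HasDerivAt F
      ((2 * ω / ((c : ℂ) ^ 2 * Ψ ω l)) * (∫ s in (0 : ℝ)..l, (Ψ ω s) ^ 2 * (ε s : ℂ))
        + Complex.I * ((Real.sqrt εoo / c : ℝ) : ℂ) * Ψ ω l) ω ∧
    (deriv F ω = 0 ↔
      (∫ s in (0 : ℝ)..l, (Ψ ω s) ^ 2 * (ε s : ℂ))
        + Complex.I * (((c * Real.sqrt εoo : ℝ) : ℂ) / (2 * ω)) * (Ψ ω l) ^ 2 = 0) :=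
  deriv_F_and_degeneracy_general l c ε₁ ε₂ εoo hl hc ε hmeas hεb Ψ Ψs hd1 hd2 h0 h1 F hF ω hω hFω
    hψl
end

section
/- Let ε be an admissible cavity with QN eigenvalue ω and mode ψ, and suppose ψ(l,ω;ε) ≠ 0. Then for any bounded measurable direction h on [0,l], the derivative of F(ω; ε + ζh) with respect to ζ at ζ = 0 equals (ω²/(c²ψ(l,ω;ε)))·∫₀^l ψ²(s,ω;ε)·h(s) ds. -/
/-!
The Wronskian `W = ψ_ζ' ψ₀ - ψ_ζ ψ₀'` of the modes for `ε + ζh` and for `ε` vanishes at `0` and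
has derivative `-(ω²/c²) ζ h ψ_ζ ψ₀`. Evaluating it at `l`, where `F(ω; ε) = 0` says
`ψ₀'(l) = iω√ε∞/c · ψ₀(l)`, gives the exact factorisation `F(ζ) = ζ G(ζ)` with
`G(ζ) = ω²/(c²ψ₀(l)) ∫₀^l h ψ_ζ ψ₀`. Grönwall's inequality for `ψ_ζ - ψ₀` gives
`‖ψ_ζ - ψ₀‖ = O(ζ)` uniformly on `[0, l]`, so `G` is continuous at `0` and `F'(0) = G(0)`.
-/

open Set Filter Topology MeasureTheory intervalIntegral

theorem hasDerivAt_of_eq_add_mul_of_continuousAt {𝕜 : Type*} [NontriviallyNormedField 𝕜]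
    {f g : 𝕜 → 𝕜} {x : 𝕜} (hf : ∀ y, f y = f x + (y - x) * g y) (hg : ContinuousAt g x) :
    HasDerivAt f (g x) x := by
  rw [hasDerivAt_iff_tendsto_slope]
  refine (hg.tendsto.mono_left nhdsWithin_le_nhds).congr' ?_
  filter_upwards [self_mem_nhdsWithin] with y hy
  rw [slope_def_field, hf y]
  field_simp [sub_ne_zero.2 hy]
  ring

theorem tendsto_intervalIntegral_of_norm_sub_le {ι E : Type*} [NormedAddCommGroup E]
    [NormedSpace ℝ E] {l : Filter ι} {a b : ℝ} {f : ι → ℝ → E} {f₀ : ℝ → E} {δ : ι → ℝ}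
    (hδ : Tendsto δ l (𝓝 0))
    (hf : ∀ᶠ i in l, IntervalIntegrable (f i) volume a b ∧ ∀ s ∈ uIoc a b, ‖f i s - f₀ s‖ ≤ δ i)
    (hf₀ : IntervalIntegrable f₀ volume a b) :
    Tendsto (fun i => ∫ s in a..b, f i s) l (𝓝 (∫ s in a..b, f₀ s)) := by
  rw [tendsto_iff_norm_sub_tendsto_zero]
  refine squeeze_zero_norm' ?_ (by simpa using hδ.mul_const |b - a|)
  filter_upwards [hf] with i ⟨hint, hle⟩
  rw [norm_norm, ← integral_sub hint hf₀]
  exact norm_integral_le_of_norm_le_const hle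

theorem intervalIntegrable_of_norm_le {E : Type*} [NormedAddCommGroup E] {f : ℝ → E}
    {a b M : ℝ} (hf : AEStronglyMeasurable f volume) (hM : ∀ s, ‖f s‖ ≤ M) :
    IntervalIntegrable f volume a b :=
  intervalIntegrable_iff.2 <|
    Measure.integrableOn_of_bounded (by simp [Real.volume_uIoc]) hf (ae_of_all _ hM)

theorem norm_prod_mul_add_le {R : Type*} [NormedRing R] {p g d e : R} {K η : ℝ}
    (hp : ‖p‖ ≤ K) (hg : ‖g‖ ≤ η) : ‖(e, p * d + g)‖ ≤ max 1 K * ‖(d, e)‖ + η := by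
  have hη : 0 ≤ η := (norm_nonneg g).trans hg
  have hK : 0 ≤ K := (norm_nonneg p).trans hp
  rw [Prod.norm_def, Prod.norm_def]
  refine max_le ?_ ?_
  · calc ‖e‖ ≤ 1 * max ‖d‖ ‖e‖ := by rw [one_mul]; exact le_max_right _ _
      _ ≤ max 1 K * max ‖d‖ ‖e‖ := by gcongr; exact le_max_left _ _
      _ ≤ max 1 K * max ‖d‖ ‖e‖ + η := le_add_of_nonneg_right hη
  · calc ‖p * d + g‖ ≤ K * ‖d‖ + η := by
          grw [norm_add_le, norm_mul_le, hp, hg]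
      _ ≤ max 1 K * max ‖d‖ ‖e‖ + η := by gcongr <;> simp

section SecondOrder

variable {𝕜 : Type*} [RCLike 𝕜] {a b : ℝ}

theorem norm_sub_le_gronwallBound_of_hasDerivAt {K η : ℝ} {p₁ p₂ y₁ y₂ z₁ z₂ : ℝ → 𝕜}
    (hy₁ : ∀ s ∈ Icc a b, HasDerivAt y₁ (z₁ s) s)
    (hz₁ : ∀ s ∈ Icc a b, HasDerivAt z₁ (p₁ s * y₁ s) s)
    (hy₂ : ∀ s ∈ Icc a b, HasDerivAt y₂ (z₂ s) s)
    (hz₂ : ∀ s ∈ Icc a b, HasDerivAt z₂ (p₂ s * y₂ s) s)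
    (hya : y₁ a = y₂ a) (hza : z₁ a = z₂ a)
    (hp₁ : ∀ s ∈ Ico a b, ‖p₁ s‖ ≤ K) (hη : ∀ s ∈ Ico a b, ‖(p₁ s - p₂ s) * y₂ s‖ ≤ η)
    {s : ℝ} (hs : s ∈ Icc a b) :
    ‖y₁ s - y₂ s‖ ≤ gronwallBound 0 (max 1 K) η (s - a) := by
  have hderiv : ∀ s ∈ Icc a b, HasDerivAt (fun s => (y₁ s - y₂ s, z₁ s - z₂ s))
      (z₁ s - z₂ s, p₁ s * (y₁ s - y₂ s) + (p₁ s - p₂ s) * y₂ s) s := fun s hs =>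
    ((hy₁ s hs).sub (hy₂ s hs)).prodMk (((hz₁ s hs).sub (hz₂ s hs)).congr_deriv (by ring))
  refine (norm_fst_le _).trans <| norm_le_gronwallBound_of_norm_deriv_right_le
    (HasDerivAt.continuousOn hderiv)
    (fun t ht => (hderiv t (Ico_subset_Icc_self ht)).hasDerivWithinAt)
    (by simp [hya, hza]) (fun t ht => norm_prod_mul_add_le (hp₁ t ht) (hη t ht)) s hs

theorem wronskian_sub_wronskian_eq_integral (hab : a ≤ b) {p₁ p₂ y₁ y₂ z₁ z₂ : ℝ → 𝕜}
    (hy₁ : ∀ s ∈ Icc a b, HasDerivAt y₁ (z₁ s) s)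
    (hz₁ : ∀ s ∈ Icc a b, HasDerivAt z₁ (p₁ s * y₁ s) s)
    (hy₂ : ∀ s ∈ Icc a b, HasDerivAt y₂ (z₂ s) s)
    (hz₂ : ∀ s ∈ Icc a b, HasDerivAt z₂ (p₂ s * y₂ s) s)
    (hint : IntervalIntegrable (fun s => (p₁ s - p₂ s) * (y₁ s * y₂ s)) volume a b) :
    (z₁ b * y₂ b - y₁ b * z₂ b) - (z₁ a * y₂ a - y₁ a * z₂ a) =
      ∫ s in a..b, (p₁ s - p₂ s) * (y₁ s * y₂ s) := by
  refine (integral_eq_sub_of_hasDerivAt (f := fun s => z₁ s * y₂ s - y₁ s * z₂ s)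
    (fun s hs => ?_) hint).symm
  rw [uIcc_of_le hab] at hs
  exact (((hz₁ s hs).mul (hy₂ s hs)).sub ((hy₁ s hs).mul (hz₂ s hs))).congr_deriv (by ring)

variable {Kp Kq : ℝ} {p q : ℝ → 𝕜} {Ψ Ψs : 𝕜 → ℝ → 𝕜}

theorem intervalIntegrable_mul_mul_of_hasDerivAt (hab : a ≤ b)
    (hqi : IntervalIntegrable q volume a b)
    (hΨ : ∀ ζ, ∀ s ∈ Icc a b, HasDerivAt (Ψ ζ) (Ψs ζ s) s) (ζ ξ : 𝕜) :
    IntervalIntegrable (fun s => q s * (Ψ ζ s * Ψ ξ s)) volume a b := by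
  refine hqi.mul_continuousOn ?_
  rw [uIcc_of_le hab]
  exact (HasDerivAt.continuousOn (hΨ ζ)).mul (HasDerivAt.continuousOn (hΨ ξ))

theorem exists_norm_sub_le_mul_norm_of_hasDerivAt
    (hp : ∀ s ∈ Icc a b, ‖p s‖ ≤ Kp) (hq : ∀ s ∈ Icc a b, ‖q s‖ ≤ Kq)
    (hΨ : ∀ ζ, ∀ s ∈ Icc a b, HasDerivAt (Ψ ζ) (Ψs ζ s) s)
    (hΨs : ∀ ζ, ∀ s ∈ Icc a b, HasDerivAt (Ψs ζ) ((p s + ζ * q s) * Ψ ζ s) s)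
    (hΨa : ∀ ζ, Ψ ζ a = Ψ 0 a) (hΨsa : ∀ ζ, Ψs ζ a = Ψs 0 a) :
    ∃ L, ∀ ζ : 𝕜, ‖ζ‖ ≤ 1 → ∀ s ∈ Icc a b, ‖Ψ ζ s - Ψ 0 s‖ ≤ L * ‖ζ‖ := by
  obtain ⟨B, hB⟩ := isCompact_Icc.exists_bound_of_continuousOn (HasDerivAt.continuousOn (hΨ 0))
  set K := max 1 (Kp + Kq)
  refine ⟨gronwallBound 0 K (Kq * B) (b - a), fun ζ hζ s hs => ?_⟩
  have ha : a ∈ Icc a b := ⟨le_rfl, hs.1.trans hs.2⟩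
  have hKq : 0 ≤ Kq := (norm_nonneg _).trans (hq a ha)
  have hB₀ : 0 ≤ B := (norm_nonneg _).trans (hB a ha)
  have hcoef : ∀ t ∈ Ico a b, ‖p t + ζ * q t‖ ≤ Kp + Kq := fun t ht => by
    have ht := Ico_subset_Icc_self ht
    grw [norm_add_le, norm_mul, hp t ht, hq t ht, hζ, one_mul]
  have hpert : ∀ t ∈ Ico a b, ‖((p t + ζ * q t) - (p t + 0 * q t)) * Ψ 0 t‖ ≤ ‖ζ‖ * (Kq * B) :=
    fun t ht => by
    have ht := Ico_subset_Icc_self ht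
    rw [zero_mul, add_zero, add_sub_cancel_left, norm_mul, norm_mul, mul_assoc]
    gcongr
    exacts [hq t ht, hB t ht]
  calc ‖Ψ ζ s - Ψ 0 s‖ ≤ gronwallBound 0 K (‖ζ‖ * (Kq * B)) (s - a) :=
        norm_sub_le_gronwallBound_of_hasDerivAt (hΨ ζ) (hΨs ζ) (hΨ 0) (hΨs 0) (hΨa ζ) (hΨsa ζ)
          hcoef hpert hs
    _ ≤ gronwallBound 0 K (‖ζ‖ * (Kq * B)) (b - a) :=
        gronwallBound_mono le_rfl (by positivity) (by positivity) (by linarith [hs.2])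
    _ = gronwallBound 0 K (Kq * B) (b - a) * ‖ζ‖ := by
        have hK : K ≠ 0 := (one_pos.trans_le (le_max_left _ _)).ne'
        rw [gronwallBound_of_K_ne_0 hK, gronwallBound_of_K_ne_0 hK]
        ring

theorem continuousAt_integral_mul_of_hasDerivAt (hab : a ≤ b)
    (hqi : IntervalIntegrable q volume a b)
    (hp : ∀ s ∈ Icc a b, ‖p s‖ ≤ Kp) (hq : ∀ s ∈ Icc a b, ‖q s‖ ≤ Kq)
    (hΨ : ∀ ζ, ∀ s ∈ Icc a b, HasDerivAt (Ψ ζ) (Ψs ζ s) s)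
    (hΨs : ∀ ζ, ∀ s ∈ Icc a b, HasDerivAt (Ψs ζ) ((p s + ζ * q s) * Ψ ζ s) s)
    (hΨa : ∀ ζ, Ψ ζ a = Ψ 0 a) (hΨsa : ∀ ζ, Ψs ζ a = Ψs 0 a) :
    ContinuousAt (fun ζ => ∫ s in a..b, q s * (Ψ ζ s * Ψ 0 s)) 0 := by
  obtain ⟨L, hL⟩ := exists_norm_sub_le_mul_norm_of_hasDerivAt hp hq hΨ hΨs hΨa hΨsa
  obtain ⟨B, hB⟩ := isCompact_Icc.exists_bound_of_continuousOn (HasDerivAt.continuousOn (hΨ 0))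
  have hint := fun ζ => intervalIntegrable_mul_mul_of_hasDerivAt hab hqi hΨ ζ 0
  have ha : a ∈ Icc a b := ⟨le_rfl, hab⟩
  have hKq : 0 ≤ Kq := (norm_nonneg _).trans (hq a ha)
  refine tendsto_intervalIntegral_of_norm_sub_le (δ := fun ζ => L * ‖ζ‖ * (Kq * B))
    ((by fun_prop : Continuous fun ζ : 𝕜 => L * ‖ζ‖ * (Kq * B)).tendsto' 0 0 (by simp)) ?_
    (hint 0)
  filter_upwards [Metric.closedBall_mem_nhds (0 : 𝕜) one_pos] with ζ hζ
  refine ⟨hint ζ, fun s hs => ?_⟩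
  rw [uIoc_of_le hab] at hs
  have hs := Ioc_subset_Icc_self hs
  have hLs := hL ζ (by simpa using hζ) s hs
  calc ‖q s * (Ψ ζ s * Ψ 0 s) - q s * (Ψ 0 s * Ψ 0 s)‖
      = ‖Ψ ζ s - Ψ 0 s‖ * (‖q s‖ * ‖Ψ 0 s‖) := by
        rw [← mul_sub, ← sub_mul, norm_mul, norm_mul]; ring
    _ ≤ L * ‖ζ‖ * (Kq * B) := mul_le_mul hLs (mul_le_mul (hq s hs) (hB s hs) (norm_nonneg _) hKq)
        (by positivity) ((norm_nonneg _).trans hLs)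

theorem sub_eq_mul_neg_integral_div_of_hasDerivAt (hab : a ≤ b) {α : 𝕜}
    (hqi : IntervalIntegrable q volume a b)
    (hΨ : ∀ ζ, ∀ s ∈ Icc a b, HasDerivAt (Ψ ζ) (Ψs ζ s) s)
    (hΨs : ∀ ζ, ∀ s ∈ Icc a b, HasDerivAt (Ψs ζ) ((p s + ζ * q s) * Ψ ζ s) s)
    (hΨa : ∀ ζ, Ψ ζ a = 0) (hα : Ψs 0 b = α * Ψ 0 b) (hΨb : Ψ 0 b ≠ 0) (ζ : 𝕜) :
    α * Ψ ζ b - Ψs ζ b = ζ * (-(∫ s in a..b, q s * (Ψ ζ s * Ψ 0 s)) / Ψ 0 b) := by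
  have hint := intervalIntegrable_mul_mul_of_hasDerivAt hab hqi hΨ ζ 0
  have hdiff : ∀ s, (p s + ζ * q s - (p s + 0 * q s)) * (Ψ ζ s * Ψ 0 s) =
      ζ * (q s * (Ψ ζ s * Ψ 0 s)) := fun s => by ring
  have hW := wronskian_sub_wronskian_eq_integral hab (hΨ ζ) (hΨs ζ) (hΨ 0) (hΨs 0)
    (by simpa only [hdiff] using hint.const_mul ζ)
  rw [integral_congr fun s _ => hdiff s, intervalIntegral.integral_const_mul, hΨa, hΨa, hα]
    at hW
  rw [← mul_div_assoc, eq_div_iff hΨb]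
  linear_combination -hW

end SecondOrder

theorem directional_derivative_F_general
    (l c ε₁ ε₂ εoo : ℝ) (hl : 0 < l)
    (ε : ℝ → ℝ) (hεb : ∀ s, ε₁ ≤ ε s ∧ ε s ≤ ε₂)
    (h : ℝ → ℝ) (hhmeas : Measurable h) (hhbd : ∃ M, ∀ s, |h s| ≤ M)
    (ω : ℂ)
    (Ψ Ψs : ℂ → ℝ → ℂ)
    (hd1 : ∀ ζ, ∀ s ∈ Icc (0 : ℝ) l, HasDerivAt (Ψ ζ) (Ψs ζ s) s)
    (hd2 : ∀ ζ, ∀ s ∈ Icc (0 : ℝ) l,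
      HasDerivAt (Ψs ζ)
        (-(ω ^ 2 / (c : ℂ) ^ 2) * ((ε s : ℂ) + ζ * (h s : ℂ)) * Ψ ζ s) s)
    (h0 : ∀ ζ, Ψ ζ 0 = 0) (h1 : ∀ ζ, Ψs ζ 0 = 1)
    (F : ℂ → ℂ)
    (hF : ∀ ζ, F ζ = Complex.I * ω * ((Real.sqrt εoo / c : ℝ) : ℂ) * Ψ ζ l - Ψs ζ l)
    (hF0 : F 0 = 0) (hψl : Ψ 0 l ≠ 0) :
    HasDerivAt F
      ((ω ^ 2 / ((c : ℂ) ^ 2 * Ψ 0 l)) *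
        (∫ s in (0 : ℝ)..l, (Ψ 0 s) ^ 2 * (h s : ℂ))) 0 := by
  obtain ⟨M, hM⟩ := hhbd
  set k : ℂ := -(ω ^ 2 / (c : ℂ) ^ 2)
  have hΨs : ∀ ζ, ∀ s ∈ Icc (0 : ℝ) l,
      HasDerivAt (Ψs ζ) ((k * ε s + ζ * (k * h s)) * Ψ ζ s) s :=
    fun ζ s hs => (hd2 ζ s hs).congr_deriv (by ring)
  have hp : ∀ s ∈ Icc (0 : ℝ) l, ‖k * ε s‖ ≤ ‖k‖ * max |ε₁| |ε₂| := fun s _ => by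
    simpa using mul_le_mul_of_nonneg_left (abs_le_max_abs_abs (hεb s).1 (hεb s).2) (norm_nonneg k)
  have hq : ∀ s ∈ Icc (0 : ℝ) l, ‖k * h s‖ ≤ ‖k‖ * M := fun s _ => by
    simpa using mul_le_mul_of_nonneg_left (hM s) (norm_nonneg k)
  have hqi : IntervalIntegrable (fun s => k * (h s : ℂ)) volume 0 l :=
    (intervalIntegrable_of_norm_le hhmeas.complex_ofReal.aestronglyMeasurable
      (by simpa using hM)).const_mul k
  have hα : Ψs 0 l = Complex.I * ω * ((Real.sqrt εoo / c : ℝ) : ℂ) * Ψ 0 l := by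
    rw [hF] at hF0
    linear_combination -hF0
  have hfactor : ∀ ζ, F ζ = F 0 + (ζ - 0) *
      (-(∫ s in (0 : ℝ)..l, k * h s * (Ψ ζ s * Ψ 0 s)) / Ψ 0 l) := fun ζ => by
    rw [hF0, hF, zero_add, sub_zero]
    exact sub_eq_mul_neg_integral_div_of_hasDerivAt hl.le hqi hd1 hΨs h0 hα hψl ζ
  have hcont := continuousAt_integral_mul_of_hasDerivAt hl.le hqi hp hq hd1 hΨs
    (fun ζ => by rw [h0, h0]) (fun ζ => by rw [h1, h1])
  have hvalue : ω ^ 2 / ((c : ℂ) ^ 2 * Ψ 0 l) * ∫ s in (0 : ℝ)..l, Ψ 0 s ^ 2 * h s =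
      -(∫ s in (0 : ℝ)..l, k * h s * (Ψ 0 s * Ψ 0 s)) / Ψ 0 l := by
    rw [← intervalIntegral.integral_const_mul, ← intervalIntegral.integral_neg,
      ← intervalIntegral.integral_div]
    congr 1 with s
    ring
  rw [hvalue]
  exact hasDerivAt_of_eq_add_mul_of_continuousAt hfactor (hcont.neg.div_const _)

/-- Directional derivative of `F(ω; ε + ζh)` in `ζ` at `ζ = 0`:
it equals `(ω²/(c²ψ(l)))·∫₀^l ψ²(s) h(s) ds`. -/
theorem directional_derivative_F
    (l c ε₁ ε₂ εoo : ℝ) (hl : 0 < l) (hc : 0 < c)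
    (hε₁ : 1 ≤ ε₁) (h12 : ε₁ < ε₂) (hεoo : 1 ≤ εoo)
    (ε : ℝ → ℝ) (hmeas : Measurable ε) (hεb : ∀ s, ε₁ ≤ ε s ∧ ε s ≤ ε₂)
    (h : ℝ → ℝ) (hhmeas : Measurable h) (hhbd : ∃ M, ∀ s, |h s| ≤ M)
    (ω : ℂ) (hω : ω ≠ 0)
    (Ψ Ψs : ℂ → ℝ → ℂ)
    (hd1 : ∀ ζ, ∀ s ∈ Icc (0 : ℝ) l, HasDerivAt (Ψ ζ) (Ψs ζ s) s)
    (hd2 : ∀ ζ, ∀ s ∈ Icc (0 : ℝ) l,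
      HasDerivAt (Ψs ζ)
        (-(ω ^ 2 / (c : ℂ) ^ 2) * ((ε s : ℂ) + ζ * (h s : ℂ)) * Ψ ζ s) s)
    (h0 : ∀ ζ, Ψ ζ 0 = 0) (h1 : ∀ ζ, Ψs ζ 0 = 1)
    (F : ℂ → ℂ)
    (hF : ∀ ζ, F ζ = Complex.I * ω * ((Real.sqrt εoo / c : ℝ) : ℂ) * Ψ ζ l - Ψs ζ l)
    (hF0 : F 0 = 0) (hψl : Ψ 0 l ≠ 0) :
    HasDerivAt F
      ((ω ^ 2 / ((c : ℂ) ^ 2 * Ψ 0 l)) *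
        (∫ s in (0 : ℝ)..l, (Ψ 0 s) ^ 2 * (h s : ℂ))) 0 :=
  directional_derivative_F_general l c ε₁ ε₂ εoo hl ε hεb h hhmeas hhbd ω Ψ Ψs hd1 hd2 h0 h1 F hF
    hF0 hψl
end

section
/- For a fixed admissible cavity ε (not identically equal to ε_∞ in the trivial sense), the function F(z;ε) is not identically zero, and hence the set of QN eigenvalues of ε is a discrete subset of ℂ (isolated points with no finite accumulation point). -/
open Set MeasureTheory Filter Topology
open scoped Nat

/-!
With `q = -z²/c²`, `Ψ z` solves `y'' = q ε y`, `y 0 = 0`, `y' 0 = 1` on `[0, l]`. Picard iteration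
writes the solution as `∑ qⁿ φₙ` with `φ₀ s = s` and `φₙ₊₁ = ∫∫ ε φₙ`, and the bound
`‖φₙ s‖ ≤ Bⁿ s²ⁿ⁺¹ / (2n+1)!` (for `|ε| ≤ B`) makes `∑ qⁿ φₙ(l)` and `∑ qⁿ φₙ'(l)` entire
functions of `q`, hence of `z`. The remainders `∑_{n<N} qⁿ φₙ - Ψ z` satisfy the same pair of
integral recursions as the `φₙ`, so the same bound shows that they tend to zero: `F` is entire.
As `F 0 = -1`, its zeros are isolated.
-/

noncomputable section

theorem norm_integral_le_mul_pow_div_factorial {E : Type*} [NormedAddCommGroup E]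
    [NormedSpace ℝ E] {f : ℝ → E} {s A : ℝ} {m : ℕ} (hs : 0 ≤ s)
    (hf : ∀ u ∈ Ioc 0 s, ‖f u‖ ≤ A * u ^ m / m !) :
    ‖∫ u in 0..s, f u‖ ≤ A * s ^ (m + 1) / (m + 1)! := by
  have hbound : ∫ u in 0..s, A * u ^ m / m ! = A * s ^ (m + 1) / (m + 1)! := by
    rw [intervalIntegral.integral_div, intervalIntegral.integral_const_mul, integral_pow,
      Nat.factorial_succ]
    push_cast
    field_simp
    ring
  rw [← hbound]
  exact intervalIntegral.norm_integral_le_of_norm_le hs (.of_forall hf)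
    ((by fun_prop : Continuous fun u : ℝ => A * u ^ m / m !).intervalIntegrable _ _)

theorem mul_pow_pow_div_factorial_le {M K s : ℝ} (hM : 0 ≤ M) (hK : 0 ≤ K) (hs : 0 ≤ s)
    (j N : ℕ) :
    M * K ^ N * s ^ (j + 2 * N) / (j + 2 * N)! ≤ M * s ^ j * (K * s ^ 2) ^ N / N ! := by
  have hfac : (N ! : ℝ) ≤ (j + 2 * N)! := by exact_mod_cast Nat.factorial_le (by omega)
  calc M * K ^ N * s ^ (j + 2 * N) / (j + 2 * N)!
      = M * s ^ j * (K * s ^ 2) ^ N / (j + 2 * N)! := by ring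
    _ ≤ M * s ^ j * (K * s ^ 2) ^ N / N ! :=
        div_le_div_of_nonneg_left (by positivity) (by positivity) hfac

theorem tendsto_mul_pow_div_factorial_atTop_zero (C D : ℝ) :
    Tendsto (fun N : ℕ => C * D ^ N / N !) atTop (𝓝 0) := by
  simpa only [mul_div_assoc, mul_zero] using
    (FloorSemiring.tendsto_pow_div_factorial_atTop D).const_mul C

theorem summable_norm_mul_pow_of_norm_le {a : ℕ → ℂ} {C D : ℝ}
    (ha : ∀ n, ‖a n‖ ≤ C * D ^ n / n !) (q : ℂ) : Summable fun n => ‖a n * q ^ n‖ := by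
  refine .of_nonneg_of_le (fun n => norm_nonneg _) (fun n => ?_)
    ((Real.summable_pow_div_factorial (D * ‖q‖)).mul_left C)
  rw [norm_mul, norm_pow, mul_pow, ← mul_div_assoc, mul_div_right_comm, ← mul_assoc]
  exact mul_le_mul_of_nonneg_right (by simpa [mul_div_right_comm] using ha n) (by positivity)

theorem analyticOnNhd_tsum_mul_pow {a : ℕ → ℂ} (ha : ∀ q : ℂ, Summable fun n => ‖a n * q ^ n‖) :
    AnalyticOnNhd ℂ (fun q => ∑' n, a n * q ^ n) univ := by
  set p := FormalMultilinearSeries.ofScalars ℂ a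
  have hrad : p.radius = ⊤ := p.radius_eq_top_of_summable_norm fun r => by
    simpa [p, FormalMultilinearSeries.ofScalars_norm] using ha r
  have hsum : p.sum = fun q => ∑' n, a n * q ^ n := funext fun q => by
    simp [p, ← FormalMultilinearSeries.ofScalarsSum.eq_1, FormalMultilinearSeries.ofScalars_sum_eq]
  rw [← hsum]
  intro q _
  exact (p.hasFPowerSeriesOnBall (by simp [hrad])).analyticAt_of_mem (by simp [hrad])

theorem AnalyticOnNhd.exists_pos_zero_isolated {E : Type*} [NormedAddCommGroup E]
    [NormedSpace ℂ E] {f : ℂ → E} (hf : AnalyticOnNhd ℂ f univ) {z₀ : ℂ} (hz₀ : f z₀ ≠ 0)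
    (ω : ℂ) : ∃ δ > 0, ∀ w, f w = 0 → ‖w - ω‖ < δ → w = ω := by
  rcases (hf ω trivial).eventually_eq_zero_or_eventually_ne_zero with h | h
  · exact absurd (hf.eqOn_zero_of_preconnected_of_eventuallyEq_zero isPreconnected_univ
      trivial h trivial) hz₀
  · obtain ⟨δ, hδ, hball⟩ := Metric.mem_nhdsWithin_iff.1 h
    refine ⟨δ, hδ, fun w hw hwδ => by_contra fun hne => hball ⟨?_, hne⟩ hw⟩
    rwa [Metric.mem_ball, dist_eq_norm]

theorem MeasureTheory.LocallyIntegrable.intervalIntegrable_mul {A : Type*} [NormedRing A]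
    {w f : ℝ → A} (hw : LocallyIntegrable w) {a b : ℝ} (hf : ContinuousOn f (uIcc a b)) :
    IntervalIntegrable (fun u => w u * f u) volume a b :=
  (hw.integrableOn_isCompact isCompact_uIcc).intervalIntegrable.mul_continuousOn hf

theorem norm_le_of_iterated_integral {Y P : ℕ → ℝ → ℂ} {v : ℝ → ℂ} {l K M : ℝ} {j : ℕ}
    (hK : 0 ≤ K) (hv : ∀ u ∈ Icc 0 l, ‖v u‖ ≤ K)
    (hY₀ : ∀ s ∈ Icc 0 l, ‖Y 0 s‖ ≤ M * s ^ j / j !)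
    (hY : ∀ N, ∀ s ∈ Icc 0 l, Y N s = ∫ t in 0..s, P N t)
    (hP : ∀ N, ∀ s ∈ Icc 0 l, P (N + 1) s = ∫ u in 0..s, v u * Y N u) (N : ℕ) :
    ∀ s ∈ Icc 0 l, ‖Y N s‖ ≤ M * K ^ N * s ^ (j + 2 * N) / (j + 2 * N)! ∧
      ‖P (N + 1) s‖ ≤ M * K ^ (N + 1) * s ^ (j + 2 * N + 1) / (j + 2 * N + 1)! := by
  have hIoc : ∀ s ∈ Icc 0 l, Ioc 0 s ⊆ Icc 0 l := fun s hs =>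
    Ioc_subset_Icc_self.trans (Icc_subset_Icc_right hs.2)
  have hP_of_hY : ∀ N, (∀ s ∈ Icc 0 l, ‖Y N s‖ ≤ M * K ^ N * s ^ (j + 2 * N) / (j + 2 * N)!) →
      ∀ s ∈ Icc 0 l,
        ‖P (N + 1) s‖ ≤ M * K ^ (N + 1) * s ^ (j + 2 * N + 1) / (j + 2 * N + 1)! := by
    intro N hYN s hs
    rw [hP N s hs]
    refine norm_integral_le_mul_pow_div_factorial hs.1 fun u hu => ?_
    calc ‖v u * Y N u‖ = ‖v u‖ * ‖Y N u‖ := norm_mul _ _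
      _ ≤ K * (M * K ^ N * u ^ (j + 2 * N) / (j + 2 * N)!) :=
          mul_le_mul (hv u (hIoc s hs hu)) (hYN u (hIoc s hs hu)) (norm_nonneg _) hK
      _ = M * K ^ (N + 1) * u ^ (j + 2 * N) / (j + 2 * N)! := by ring
  induction N with
  | zero => exact fun s hs => ⟨by simpa using hY₀ s hs, hP_of_hY 0 (by simpa using hY₀) s hs⟩
  | succ N ih =>
    have hYN : ∀ s ∈ Icc 0 l, ‖Y (N + 1) s‖ ≤
        M * K ^ (N + 1) * s ^ (j + 2 * (N + 1)) / (j + 2 * (N + 1))! := fun s hs => by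
      rw [hY (N + 1) s hs, show j + 2 * (N + 1) = j + 2 * N + 1 + 1 by ring]
      exact norm_integral_le_mul_pow_div_factorial hs.1 fun u hu => (ih u (hIoc s hs hu)).2
    exact fun s hs => ⟨hYN s hs, hP_of_hY (N + 1) hYN s hs⟩

/-- The coefficient of `qⁿ` in the solution of `y'' = q w y`, `y 0 = 0`, `y' 0 = 1`;
`picardCoeffDeriv w n` is its derivative. -/
def picardCoeff (w : ℝ → ℂ) : ℕ → ℝ → ℂ
  | 0 => fun s => s
  | n + 1 => fun s => ∫ t in 0..s, ∫ u in 0..t, w u * picardCoeff w n u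

def picardCoeffDeriv (w : ℝ → ℂ) : ℕ → ℝ → ℂ
  | 0 => fun _ => 1
  | n + 1 => fun s => ∫ u in 0..s, w u * picardCoeff w n u

section Picard

variable {w : ℝ → ℂ}

theorem picardCoeff_eq_integral (n : ℕ) (s : ℝ) :
    picardCoeff w n s = ∫ t in 0..s, picardCoeffDeriv w n t := by
  cases n <;> simp [picardCoeff, picardCoeffDeriv]

theorem picardCoeffDeriv_succ (n : ℕ) (s : ℝ) :
    picardCoeffDeriv w (n + 1) s = ∫ u in 0..s, w u * picardCoeff w n u := rfl

theorem continuous_picardCoeff (hw : LocallyIntegrable w) (n : ℕ) :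
    Continuous (picardCoeff w n) ∧ Continuous (picardCoeffDeriv w n) := by
  induction n with
  | zero => exact ⟨Complex.continuous_ofReal, continuous_const⟩
  | succ n ih =>
    have hχ : Continuous (picardCoeffDeriv w (n + 1)) :=
      intervalIntegral.continuous_primitive
        (fun a b => hw.intervalIntegrable_mul ih.1.continuousOn) 0
    refine ⟨?_, hχ⟩
    simpa only [funext (picardCoeff_eq_integral (w := w) (n + 1))] using
      intervalIntegral.continuous_primitive (fun a b => hχ.intervalIntegrable a b) 0

theorem norm_picardCoeff_le {l B : ℝ} (hB : ∀ u ∈ Icc 0 l, ‖w u‖ ≤ B) (n : ℕ) {s : ℝ}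
    (hs : s ∈ Icc 0 l) :
    ‖picardCoeff w n s‖ ≤ s * (B * s ^ 2) ^ n / n ! ∧
      ‖picardCoeffDeriv w n s‖ ≤ 1 * (B * s ^ 2) ^ n / n ! := by
  have hB₀ : 0 ≤ B := (norm_nonneg _).trans (hB 0 ⟨le_rfl, hs.1.trans hs.2⟩)
  have h := norm_le_of_iterated_integral (M := 1) (j := 1) hB₀ hB
    (fun s hs => by simp [picardCoeff, abs_of_nonneg hs.1])
    (fun n s _ => picardCoeff_eq_integral n s) (fun n s _ => picardCoeffDeriv_succ n s)
  refine ⟨(h n s hs).1.trans ?_, ?_⟩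
  · simpa using mul_pow_pow_div_factorial_le zero_le_one hB₀ hs.1 1 n
  · cases n with
    | zero => simp [picardCoeffDeriv]
    | succ n =>
      refine (h n s hs).2.trans ?_
      simpa [show 1 + 2 * n + 1 = 0 + 2 * (n + 1) by ring] using
        mul_pow_pow_div_factorial_le zero_le_one hB₀ hs.1 0 (n + 1)

theorem integral_sum_picardCoeffDeriv (hw : LocallyIntegrable w) (q : ℂ) (N : ℕ) (s : ℝ) :
    ∫ t in 0..s, ∑ n ∈ Finset.range N, picardCoeffDeriv w n t * q ^ n =
      ∑ n ∈ Finset.range N, picardCoeff w n s * q ^ n := by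
  rw [intervalIntegral.integral_finsetSum fun n _ =>
    ((continuous_picardCoeff hw n).2.mul_const (q ^ n)).intervalIntegrable _ _]
  simp only [intervalIntegral.integral_mul_const, ← picardCoeff_eq_integral]

theorem integral_mul_sum_picardCoeff (hw : LocallyIntegrable w) (q : ℂ) (N : ℕ) (s : ℝ) :
    ∫ u in 0..s, q * w u * ∑ n ∈ Finset.range N, picardCoeff w n u * q ^ n =
      ∑ n ∈ Finset.range (N + 1), picardCoeffDeriv w n s * q ^ n - 1 := by
  have hterm : ∀ u, q * w u * ∑ n ∈ Finset.range N, picardCoeff w n u * q ^ n =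
      ∑ n ∈ Finset.range N, w u * picardCoeff w n u * q ^ (n + 1) := fun u => by
    rw [Finset.mul_sum]
    exact Finset.sum_congr rfl fun n _ => by ring
  simp only [hterm]
  rw [intervalIntegral.integral_finsetSum fun n _ =>
    (hw.intervalIntegrable_mul (continuous_picardCoeff hw n).1.continuousOn).mul_const _,
    Finset.sum_range_succ']
  simp [intervalIntegral.integral_mul_const, picardCoeffDeriv]

theorem sum_picardCoeff_sub_eq_integral (hw : LocallyIntegrable w) {l : ℝ} {q : ℂ}
    {y p : ℝ → ℂ} (hy : ∀ s ∈ Icc 0 l, HasDerivAt y (p s) s)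
    (hp : ∀ s ∈ Icc 0 l, HasDerivAt p (q * w s * y s) s) (hy₀ : y 0 = 0) (hp₀ : p 0 = 1)
    (N : ℕ) {s : ℝ} (hs : s ∈ Icc 0 l) :
    ∑ n ∈ Finset.range N, picardCoeff w n s * q ^ n - y s =
        ∫ t in 0..s, (∑ n ∈ Finset.range N, picardCoeffDeriv w n t * q ^ n - p t) ∧
      ∑ n ∈ Finset.range (N + 1), picardCoeffDeriv w n s * q ^ n - p s =
        ∫ u in 0..s, q * w u * (∑ n ∈ Finset.range N, picardCoeff w n u * q ^ n - y u) := by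
  have hsub : uIcc 0 s ⊆ Icc 0 l := by
    rw [uIcc_of_le hs.1]
    exact Icc_subset_Icc_right hs.2
  have hyc : ContinuousOn y (uIcc 0 s) := fun t ht =>
    (hy t (hsub ht)).continuousAt.continuousWithinAt
  have hpc : ContinuousOn p (uIcc 0 s) := fun t ht =>
    (hp t (hsub ht)).continuousAt.continuousWithinAt
  have hwf : ∀ f : ℝ → ℂ, ContinuousOn f (uIcc 0 s) →
      IntervalIntegrable (fun u => q * w u * f u) volume 0 s := fun f hf => by
    simpa only [mul_assoc] using (hw.intervalIntegrable_mul hf).const_mul q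
  have hy_int : y s = ∫ t in 0..s, p t := by
    rw [intervalIntegral.integral_eq_sub_of_hasDerivAt (fun t ht => hy t (hsub ht))
      hpc.intervalIntegrable, hy₀, sub_zero]
  have hp_int : p s = 1 + ∫ u in 0..s, q * w u * y u := by
    rw [intervalIntegral.integral_eq_sub_of_hasDerivAt (fun t ht => hp t (hsub ht))
      (hwf y hyc), hp₀, add_sub_cancel]
  constructor
  · rw [intervalIntegral.integral_sub ((continuous_finsetSum _ fun n _ =>
      (continuous_picardCoeff hw n).2.mul_const _).intervalIntegrable _ _)
      hpc.intervalIntegrable, integral_sum_picardCoeffDeriv hw, ← hy_int]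
  · simp only [mul_sub]
    rw [intervalIntegral.integral_sub (hwf _ (continuous_finsetSum _
      fun n _ => (continuous_picardCoeff hw n).1.mul_const _).continuousOn) (hwf y hyc),
      integral_mul_sum_picardCoeff hw, hp_int]
    ring

theorem tendsto_sum_picardCoeff_of_hasDerivAt (hw : LocallyIntegrable w) {l B : ℝ}
    (hB : ∀ u ∈ Icc 0 l, ‖w u‖ ≤ B) (hl : 0 ≤ l) {q : ℂ} {y p : ℝ → ℂ}
    (hy : ∀ s ∈ Icc 0 l, HasDerivAt y (p s) s)
    (hp : ∀ s ∈ Icc 0 l, HasDerivAt p (q * w s * y s) s) (hy₀ : y 0 = 0) (hp₀ : p 0 = 1) :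
    Tendsto (fun N => ∑ n ∈ Finset.range N, picardCoeff w n l * q ^ n) atTop (𝓝 (y l)) ∧
      Tendsto (fun N => ∑ n ∈ Finset.range N, picardCoeffDeriv w n l * q ^ n) atTop
        (𝓝 (p l)) := by
  have hB₀ : 0 ≤ B := (norm_nonneg _).trans (hB 0 ⟨le_rfl, hl⟩)
  have hK : 0 ≤ ‖q‖ * B := mul_nonneg (norm_nonneg q) hB₀
  obtain ⟨M, hM⟩ := isCompact_Icc.exists_bound_of_continuousOn fun s hs =>
    (hy s hs).continuousAt.continuousWithinAt
  have hM₀ : 0 ≤ M := (norm_nonneg _).trans (hM 0 ⟨le_rfl, hl⟩)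
  have hbound := norm_le_of_iterated_integral (j := 0) hK
    (fun u hu => by rw [norm_mul]; exact mul_le_mul_of_nonneg_left (hB u hu) (norm_nonneg q))
    (fun s hs => by simpa using hM s hs)
    (fun N s hs => (sum_picardCoeff_sub_eq_integral hw hy hp hy₀ hp₀ N hs).1)
    (fun N s hs => (sum_picardCoeff_sub_eq_integral hw hy hp hy₀ hp₀ N hs).2)
  refine ⟨tendsto_sub_nhds_zero_iff.1 (squeeze_zero_norm (fun N =>
    (hbound N l ⟨hl, le_rfl⟩).1.trans (mul_pow_pow_div_factorial_le hM₀ hK hl 0 N))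
    (tendsto_mul_pow_div_factorial_atTop_zero _ _)), ?_⟩
  refine (tendsto_add_atTop_iff_nat 1).1 (tendsto_sub_nhds_zero_iff.1 (squeeze_zero_norm
    (fun N => (hbound N l ⟨hl, le_rfl⟩).2.trans (le_of_eq_of_le ?_
      (mul_pow_pow_div_factorial_le (mul_nonneg hM₀ hK) hK hl 1 N)))
    (tendsto_mul_pow_div_factorial_atTop_zero _ _)))
  rw [show 0 + 2 * N + 1 = 1 + 2 * N by ring]
  ring

theorem hasSum_picardCoeff_of_hasDerivAt (hw : LocallyIntegrable w) {l B : ℝ}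
    (hB : ∀ u ∈ Icc 0 l, ‖w u‖ ≤ B) (hl : 0 ≤ l) {q : ℂ} {y p : ℝ → ℂ}
    (hy : ∀ s ∈ Icc 0 l, HasDerivAt y (p s) s)
    (hp : ∀ s ∈ Icc 0 l, HasDerivAt p (q * w s * y s) s) (hy₀ : y 0 = 0) (hp₀ : p 0 = 1) :
    HasSum (fun n => picardCoeff w n l * q ^ n) (y l) ∧
      HasSum (fun n => picardCoeffDeriv w n l * q ^ n) (p l) := by
  have hcoeff := fun n => norm_picardCoeff_le hB n ⟨hl, le_rfl⟩
  have hlim := tendsto_sum_picardCoeff_of_hasDerivAt hw hB hl hy hp hy₀ hp₀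
  exact
    ⟨(summable_norm_mul_pow_of_norm_le (fun n => (hcoeff n).1) q).of_norm.hasSum_iff_tendsto_nat.2
      hlim.1,
    (summable_norm_mul_pow_of_norm_le (fun n => (hcoeff n).2) q).of_norm.hasSum_iff_tendsto_nat.2
      hlim.2⟩

end Picard

end

theorem QN_eigenvalues_discrete_general
    (l c ε₁ ε₂ εoo : ℝ) (hl : 0 < l)
    (ε : ℝ → ℝ) (hmeas : Measurable ε) (hεb : ∀ s, ε₁ ≤ ε s ∧ ε s ≤ ε₂)
    (Ψ Ψs : ℂ → ℝ → ℂ)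
    (hd1 : ∀ z, ∀ s ∈ Icc (0 : ℝ) l, HasDerivAt (Ψ z) (Ψs z s) s)
    (hd2 : ∀ z, ∀ s ∈ Icc (0 : ℝ) l,
      HasDerivAt (Ψs z) (-(z ^ 2 / (c : ℂ) ^ 2) * (ε s : ℂ) * Ψ z s) s)
    (h0 : ∀ z, Ψ z 0 = 0) (h1 : ∀ z, Ψs z 0 = 1)
    (F : ℂ → ℂ)
    (hF : ∀ z, F z = Complex.I * z * ((Real.sqrt εoo / c : ℝ) : ℂ) * Ψ z l - Ψs z l) :
    (∃ z, F z ≠ 0) ∧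
    ∀ ω : ℂ, F ω = 0 → ∃ δ > 0, ∀ w : ℂ, F w = 0 → ‖w - ω‖ < δ → w = ω := by
  set w : ℝ → ℂ := fun u => (ε u : ℂ)
  have hB : ∀ u, ‖w u‖ ≤ max |ε₁| |ε₂| := fun u => by
    rw [Complex.norm_real, Real.norm_eq_abs]
    exact abs_le_max_abs_abs (hεb u).1 (hεb u).2
  have hw : LocallyIntegrable w :=
    (locallyIntegrable_const (max |ε₁| |ε₂|)).mono
      (Complex.measurable_ofReal.comp hmeas).aestronglyMeasurable
      (.of_forall fun u => (hB u).trans (Real.le_norm_self _))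
  have hcoeff := fun n => norm_picardCoeff_le (fun u _ => hB u) n ⟨hl.le, le_rfl⟩
  have hsol := fun z =>
    hasSum_picardCoeff_of_hasDerivAt hw (fun u _ => hB u) hl.le (hd1 z) (hd2 z) (h0 z) (h1 z)
  have hFeq : F = fun z => Complex.I * z * ((Real.sqrt εoo / c : ℝ) : ℂ) *
      (∑' n, picardCoeff w n l * (-(z ^ 2 / (c : ℂ) ^ 2)) ^ n) -
      ∑' n, picardCoeffDeriv w n l * (-(z ^ 2 / (c : ℂ) ^ 2)) ^ n :=
    funext fun z => by rw [hF, (hsol z).1.tsum_eq, (hsol z).2.tsum_eq]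
  have hY := analyticOnNhd_tsum_mul_pow (summable_norm_mul_pow_of_norm_le fun n => (hcoeff n).1)
  have hP := analyticOnNhd_tsum_mul_pow (summable_norm_mul_pow_of_norm_le fun n => (hcoeff n).2)
  have hFa : AnalyticOnNhd ℂ F univ := by
    rw [hFeq]
    intro z _
    have hq : AnalyticAt ℂ (fun z : ℂ => -(z ^ 2 / (c : ℂ) ^ 2)) z := by fun_prop
    have := (hY _ trivial).comp hq
    have := (hP _ trivial).comp hq
    fun_prop
  have hΨs0 : Ψs 0 l = 1 := by
    have h := (hsol 0).2.unique (hasSum_single 0 fun n hn => by simp [hn])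
    simpa [picardCoeffDeriv] using h
  have hF0 : F 0 ≠ 0 := by simp [hF, hΨs0]
  exact ⟨⟨0, hF0⟩, fun ω _ => hFa.exists_pos_zero_isolated hF0 ω⟩

/-- `F(·;ε)` is not identically zero (indeed `F(0) ≠ 0`), hence the set of QN
eigenvalues of `ε` (zeros of `F`) consists of isolated points. -/
theorem QN_eigenvalues_discrete
    (l c ε₁ ε₂ εoo : ℝ) (hl : 0 < l) (hc : 0 < c)
    (hε₁ : 1 ≤ ε₁) (h12 : ε₁ < ε₂) (hεoo : 1 ≤ εoo)
    (ε : ℝ → ℝ) (hmeas : Measurable ε) (hεb : ∀ s, ε₁ ≤ ε s ∧ ε s ≤ ε₂)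
    (Ψ Ψs : ℂ → ℝ → ℂ)
    (hd1 : ∀ z, ∀ s ∈ Icc (0 : ℝ) l, HasDerivAt (Ψ z) (Ψs z s) s)
    (hd2 : ∀ z, ∀ s ∈ Icc (0 : ℝ) l,
      HasDerivAt (Ψs z) (-(z ^ 2 / (c : ℂ) ^ 2) * (ε s : ℂ) * Ψ z s) s)
    (h0 : ∀ z, Ψ z 0 = 0) (h1 : ∀ z, Ψs z 0 = 1)
    (F : ℂ → ℂ)
    (hF : ∀ z, F z = Complex.I * z * ((Real.sqrt εoo / c : ℝ) : ℂ) * Ψ z l - Ψs z l) :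
    (∃ z, F z ≠ 0) ∧
    ∀ ω : ℂ, F ω = 0 → ∃ δ > 0, ∀ w : ℂ, F w = 0 → ‖w - ω‖ < δ → w = ω :=
  QN_eigenvalues_discrete_general l c ε₁ ε₂ εoo hl ε hmeas hεb Ψ Ψs hd1 hd2 h0 h1 F hF
end

section
/- Suppose 1 ≤ ε_∞ ≤ ε₁ < ε₂. Then any real frequency α with |α| ≥ (πc/(l√ε₂))·(1/2 + ⌈1/((ε₂/ε₁)^{1/2} - 1) - 1/2⌉) is admissible, i.e., there exists a constant ε ∈ [ε₁, ε₂] and an integer n such that α = Re ωₙ(ε), where ωₙ(ε) = -i(c/(2l√ε))·ln|(ε+ε_∞)/(ε-ε_∞)| + (πc/(l√ε))·(n + 1/2). -/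
set_option maxHeartbeats 1000000

/-- Real part of the QN eigenvalue expression. -/
lemma qn_re (a b z : ℝ) (m : ℤ) :
    (-Complex.I * (a : ℂ) * (b : ℂ) + ((z : ℝ) : ℂ) * ((m : ℂ) + 1 / 2)).re
      = z * ((m : ℝ) + 1 / 2) := by
  have hm : ((m : ℂ) + 1 / 2) = (((m : ℝ) + 1 / 2 : ℝ) : ℂ) := by push_cast; ring
  rw [hm, ← Complex.ofReal_mul]
  simp [Complex.add_re, Complex.mul_re]

/-- If `1 ≤ εoo ≤ ε₁ < ε₂`, every real frequency `α` with
`|α| ≥ (πc/(l√ε₂))·(1/2 + ⌈1/(√(ε₂/ε₁) - 1) - 1/2⌉)` is admissible: it is the real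
part of a QN eigenvalue `ωₙ(ε)` of a homogeneous cavity with some constant
permittivity `ε ∈ [ε₁, ε₂]`. -/
theorem large_frequencies_admissible
    (l c ε₁ ε₂ εoo : ℝ) (hl : 0 < l) (hc : 0 < c)
    (hεoo : 1 ≤ εoo) (hoo1 : εoo ≤ ε₁) (h12 : ε₁ < ε₂)
    (α : ℝ)
    (hα : Real.pi * c / (l * Real.sqrt ε₂) *
        (1 / 2 + (⌈1 / (Real.sqrt (ε₂ / ε₁) - 1) - 1 / 2⌉ : ℤ)) ≤ |α|) :
    ∃ ε : ℝ, ε₁ ≤ ε ∧ ε ≤ ε₂ ∧ ∃ n : ℤ,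
      α = (-Complex.I * ((c / (2 * l * Real.sqrt ε) : ℝ) : ℂ) *
            ((Real.log |(ε + εoo) / (ε - εoo)| : ℝ) : ℂ) +
          ((Real.pi * c / (l * Real.sqrt ε) : ℝ) : ℂ) * ((n : ℂ) + 1 / 2)).re := by
  have hπ : (0:ℝ) < Real.pi := Real.pi_pos
  have hε₁ : (0:ℝ) < ε₁ := lt_of_lt_of_le one_pos (le_trans hεoo hoo1)
  have hε₂ : (0:ℝ) < ε₂ := lt_trans hε₁ h12
  have hs₁ : (0:ℝ) < Real.sqrt ε₁ := Real.sqrt_pos.mpr hε₁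
  have hs₂ : (0:ℝ) < Real.sqrt ε₂ := Real.sqrt_pos.mpr hε₂
  have hs12 : Real.sqrt ε₁ < Real.sqrt ε₂ := Real.sqrt_lt_sqrt hε₁.le h12
  set r := Real.sqrt (ε₂ / ε₁) with hr_def
  have hr_eq : r = Real.sqrt ε₂ / Real.sqrt ε₁ := by
    rw [hr_def, Real.sqrt_div hε₂.le]
  have hr1 : 1 < r := by
    rw [hr_eq]; exact (one_lt_div hs₁).mpr hs12
  clear_value r
  set N : ℤ := ⌈1 / (r - 1) - 1 / 2⌉ with hN_def
  have hNge : (1:ℝ) / (r - 1) - 1 / 2 ≤ (N:ℝ) := Int.le_ceil _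
  clear_value N
  set β := |α| with hβ_def
  set K₂ := Real.pi * c / (l * Real.sqrt ε₂) with hK₂
  set K₁ := Real.pi * c / (l * Real.sqrt ε₁) with hK₁
  have hK₂pos : 0 < K₂ := by rw [hK₂]; positivity
  have hK₁pos : 0 < K₁ := by rw [hK₁]; positivity
  have hK₁eq : K₁ = K₂ * r := by
    rw [hK₁, hK₂, hr_eq]; field_simp
  set n : ℤ := ⌊β / K₂ - 1 / 2⌋ with hn_def
  have hfl : (n:ℝ) ≤ β / K₂ - 1 / 2 := hn_def ▸ Int.floor_le _
  have hfl' : β / K₂ - 1 / 2 < (n:ℝ) + 1 := hn_def ▸ Int.lt_floor_add_one _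
  have hNn : (N:ℝ) ≤ (n:ℝ) := by
    have h1 : (N:ℝ) ≤ β / K₂ - 1 / 2 := by
      rw [le_sub_iff_add_le, le_div_iff₀ hK₂pos]
      nlinarith [hα]
    exact_mod_cast Int.le_floor.mpr (by rw [← hn_def] at *; exact_mod_cast h1)
  clear_value n
  have hrm1 : (0:ℝ) < r - 1 := by linarith
  have hnpos : (0:ℝ) < (n:ℝ) + 1 / 2 := by
    have h1 : (0:ℝ) < 1 / (r - 1) := by positivity
    nlinarith
  clear_value K₁ K₂ β
  have hlow : ((n:ℝ) + 1 / 2) * K₂ ≤ β := by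
    have h := mul_le_mul_of_nonneg_right hfl hK₂pos.le
    have h2 : (β / K₂) * K₂ = β := div_mul_cancel₀ _ (ne_of_gt hK₂pos)
    nlinarith
  have hhigh : β ≤ ((n:ℝ) + 1 / 2) * K₁ := by
    have h := mul_lt_mul_of_pos_right hfl' hK₂pos
    have h2 : (β / K₂) * K₂ = β := div_mul_cancel₀ _ (ne_of_gt hK₂pos)
    have h1 : β < ((n:ℝ) + 3 / 2) * K₂ := by nlinarith
    have h3 : (1:ℝ) ≤ ((n:ℝ) + 1 / 2) * (r - 1) := by
      have h4 : (1:ℝ) / (r - 1) ≤ (n:ℝ) + 1 / 2 := by linarith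
      rw [div_le_iff₀ hrm1] at h4
      linarith
    have h5 : ((n:ℝ) + 3 / 2) * K₂ ≤ ((n:ℝ) + 1 / 2) * K₁ := by
      rw [hK₁eq]; nlinarith
    linarith
  have hβpos : 0 < β := lt_of_lt_of_le (by nlinarith) hlow
  set s := ((n:ℝ) + 1 / 2) * Real.pi * c / (l * β) with hs_def
  clear_value s
  have hspos : 0 < s := by rw [hs_def]; positivity
  have hls : (0:ℝ) < l * s := by positivity
  have hmul : s * (l * β) = ((n:ℝ) + 1 / 2) * Real.pi * c := by
    rw [hs_def]; field_simp
  have hkey : Real.pi * c / (l * s) * ((n:ℝ) + 1 / 2) = β := by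
    rw [div_mul_eq_mul_div, div_eq_iff (ne_of_gt hls)]
    linear_combination -hmul
  have hs_ge : Real.sqrt ε₁ ≤ s := by
    rw [hs_def, le_div_iff₀ (by positivity)]
    have h6 : β ≤ ((n:ℝ) + 1 / 2) * (Real.pi * c) / (l * Real.sqrt ε₁) := by
      rw [hK₁] at hhigh; rw [← mul_div_assoc] at hhigh
      linarith [hhigh]
    rw [le_div_iff₀ (by positivity : (0:ℝ) < l * Real.sqrt ε₁)] at h6
    nlinarith [h6]
  have hs_le : s ≤ Real.sqrt ε₂ := by
    rw [hs_def, div_le_iff₀ (by positivity)]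
    have h6 : ((n:ℝ) + 1 / 2) * (Real.pi * c) / (l * Real.sqrt ε₂) ≤ β := by
      rw [hK₂] at hlow; rw [← mul_div_assoc] at hlow
      linarith [hlow]
    rw [div_le_iff₀ (by positivity : (0:ℝ) < l * Real.sqrt ε₂)] at h6
    nlinarith [h6]
  refine ⟨s ^ 2, ?_, ?_, ?_⟩
  · calc ε₁ = Real.sqrt ε₁ ^ 2 := (Real.sq_sqrt hε₁.le).symm
      _ ≤ s ^ 2 := by nlinarith
  · calc s ^ 2 ≤ Real.sqrt ε₂ ^ 2 := by nlinarith
      _ = ε₂ := Real.sq_sqrt hε₂.le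
  · have hsqrt : Real.sqrt (s ^ 2) = s := Real.sqrt_sq hspos.le
    rcases le_or_gt 0 α with h0 | h0
    · refine ⟨n, ?_⟩
      rw [qn_re, hsqrt, hkey, hβ_def, abs_of_nonneg h0]
    · refine ⟨-n - 1, ?_⟩
      rw [qn_re, hsqrt]
      have he : ((-n - 1 : ℤ) : ℝ) + 1 / 2 = -(((n:ℝ)) + 1 / 2) := by push_cast; ring
      rw [he, mul_neg, hkey, hβ_def, abs_of_neg h0, neg_neg]
end
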